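/- arXiv:1101.0334 — 3 statements merged into one kernel-verified Lean document; each statement's English description precedes it below -/
import Mathlib

section
/- Let k, n, r be positive integers with k ≥ 2, n ≥ 4 and r ≤ n − 2. Then R(n, n(n−1)/2 − r; k, 1) = max{n, k + r} if r ≤ n/2 − 1, and R(n, n(n−1)/2 − r; k, 1) = max{n, 2k − 2 + ⌊(2r + 4 − n)/3⌋} if r > n/2 − 1. -/
open SimpleGraph

/-- The number of edges of a simple graph. -/
noncomputable def edgeCount {V : Type*} (G : SimpleGraph V) : ℕ := Nat.card G.edgeSet

/-- The degree of a vertex in a simple graph. -/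
noncomputable def degreeCount {V : Type*} (G : SimpleGraph V) (v : V) : ℕ := Nat.card (G.neighborSet v)

/-- A finset of vertices is independent in `G`. -/
def IsIndepFinset {V : Type*} (G : SimpleGraph V) (s : Finset V) : Prop :=
  ∀ u ∈ s, ∀ v ∈ s, u ≠ v → ¬ G.Adj u v

/-- The independence number of a simple graph. -/
noncomputable def indepNum' {V : Type*} (G : SimpleGraph V) : ℕ :=
  sSup {n | ∃ s : Finset V, IsIndepFinset G s ∧ s.card = n}

/-- `G` contains a subgraph isomorphic to `H`, i.e. there is an injective
graph homomorphism from `H` to `G`. -/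
def ContainsCopy {V W : Type*} (G : SimpleGraph V) (H : SimpleGraph W) : Prop :=
  ∃ f : H →g G, Function.Injective f

/-- `G` contains no subgraph isomorphic to any graph in the family `L`. -/
def FamilyFree {V : Type*} (L : Set (Σ n : ℕ, SimpleGraph (Fin n))) (G : SimpleGraph V) : Prop :=
  ∀ H ∈ L, ¬ ContainsCopy G H.2

/-- `ex(p; L)`: the maximal number of edges in a graph of order `p`
containing no subgraph isomorphic to a member of `L`. -/
noncomputable def exNum (p : ℕ) (L : Set (Σ n : ℕ, SimpleGraph (Fin n))) : ℕ :=
  sSup {m | ∃ G : SimpleGraph (Fin p), FamilyFree L G ∧ edgeCount G = m}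

/-- `G` is an `(n,m)` graph: every subgraph induced by `n` vertices has at most `m` edges. -/
def IsNMGraph {V : Type*} (n m : ℕ) (G : SimpleGraph V) : Prop :=
  ∀ s : Finset V, s.card = n → edgeCount (G.induce (↑s : Set V)) ≤ m

/-- `e(n,m;p)`: the maximal number of edges in an `(n,m)` graph of order `p`. -/
noncomputable def maxEdgesNM (n m p : ℕ) : ℕ :=
  sSup {e | ∃ G : SimpleGraph (Fin p), IsNMGraph n m G ∧ edgeCount G = e}

/-- The Ramsey property for `R(n,r;k,s)` at order `p`: every graph `G` of order `p`
either contains a subgraph induced by `n` vertices with at most `r-1` edges, or its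
complement contains a subgraph induced by `k` vertices with at most `s-1` edges. -/
def RamseyProp (n r k s p : ℕ) : Prop :=
  ∀ G : SimpleGraph (Fin p),
    (∃ t : Finset (Fin p), t.card = n ∧ edgeCount (G.induce (↑t : Set (Fin p))) ≤ r - 1) ∨
    (∃ t : Finset (Fin p), t.card = k ∧ edgeCount ((Gᶜ).induce (↑t : Set (Fin p))) ≤ s - 1)

/-- The generalized Ramsey number `R(n,r;k,s)`. -/
noncomputable def genRamsey (n r k s : ℕ) : ℕ :=
  sInf {p | 0 < p ∧ RamseyProp n r k s p}

/-- `G` satisfies the `(k,s)` condition: every subgraph induced by `k` vertices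
has at least `s` edges. -/
def KSCondition {V : Type*} (k s : ℕ) (G : SimpleGraph V) : Prop :=
  ∀ t : Finset V, t.card = k → s ≤ edgeCount (G.induce (↑t : Set V))



/-! ### Auxiliary development -/

set_option linter.unusedSectionVars false
set_option maxHeartbeats 1000000

attribute [local instance] Classical.propDecidable

open Finset

section Dev

variable {V : Type*} [Fintype V] [DecidableEq V]

/-- neighbors of `v` within `s` -/
noncomputable def nbrIn (H : SimpleGraph V) (s : Finset V) (v : V) : Finset V :=
  s.filter (fun w => H.Adj v w)

/-- ordered count of adjacent pairs inside `s` -/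
noncomputable def ec2 (H : SimpleGraph V) (s : Finset V) : ℕ :=
  ∑ v ∈ s, (nbrIn H s v).card

noncomputable def alphaIn (H : SimpleGraph V) (s : Finset V) : ℕ :=
  (s.powerset.filter (fun t => IsIndepFinset H t)).sup Finset.card

variable {H : SimpleGraph V} {s t : Finset V} {v w : V}

lemma mem_nbrIn : w ∈ nbrIn H s v ↔ w ∈ s ∧ H.Adj v w := by
  simp [nbrIn, Finset.mem_filter]

lemma nbrIn_subset : nbrIn H s v ⊆ s := Finset.filter_subset _ _

lemma nbrIn_mono (hst : s ⊆ t) : nbrIn H s v ⊆ nbrIn H t v := by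
  intro x hx; rw [mem_nbrIn] at *; exact ⟨hst hx.1, hx.2⟩

lemma not_mem_nbrIn_self : v ∉ nbrIn H s v := by
  simp [mem_nbrIn]

lemma card_nbrIn_le : (nbrIn H s v).card ≤ s.card := Finset.card_le_card nbrIn_subset

lemma card_nbrIn_lt (hv : v ∈ s) : (nbrIn H s v).card ≤ s.card - 1 := by
  have : nbrIn H s v ⊆ s.erase v := by
    intro x hx; rw [mem_nbrIn] at hx
    exact Finset.mem_erase.2 ⟨fun h => H.irrefl (h ▸ hx.2), hx.1⟩
  calc (nbrIn H s v).card ≤ (s.erase v).card := Finset.card_le_card this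
    _ = s.card - 1 := Finset.card_erase_of_mem hv

lemma ec2_mono (hst : s ⊆ t) : ec2 H s ≤ ec2 H t := by
  unfold ec2
  refine le_trans (Finset.sum_le_sum (fun v _ => Finset.card_le_card (nbrIn_mono hst))) ?_
  exact Finset.sum_le_sum_of_subset hst

/-- the symmetric cross count -/
lemma cross_comm (A B : Finset V) :
    ∑ a ∈ A, (nbrIn H B a).card = ∑ b ∈ B, (nbrIn H A b).card := by
  have h1 : ∀ (X Y : Finset V), ∑ a ∈ X, (nbrIn H Y a).card
      = ∑ a ∈ X, ∑ b ∈ Y, (if H.Adj a b then 1 else 0) := by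
    intro X Y
    refine Finset.sum_congr rfl (fun a _ => ?_)
    rw [nbrIn, Finset.card_filter]
  rw [h1, h1, Finset.sum_comm]
  refine Finset.sum_congr rfl (fun b _ => Finset.sum_congr rfl (fun a _ => ?_))
  by_cases h : H.Adj a b
  · simp [h, h.symm]
  · have h2 : ¬ H.Adj b a := fun hc => h hc.symm
    simp [h, h2]

lemma ec2_union_split (hd : Disjoint s t) :
    ec2 H (s ∪ t) = ec2 H s + ec2 H t + 2 * ∑ a ∈ s, (nbrIn H t a).card := by
  unfold ec2
  have hsplit : ∀ v, nbrIn H (s ∪ t) v = nbrIn H s v ∪ nbrIn H t v := by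
    intro v; ext x; simp [mem_nbrIn, Finset.mem_union, or_and_right]
  have hcard : ∀ v, (nbrIn H (s ∪ t) v).card = (nbrIn H s v).card + (nbrIn H t v).card := by
    intro v; rw [hsplit]
    exact Finset.card_union_of_disjoint (Finset.disjoint_of_subset_left nbrIn_subset
      (Finset.disjoint_of_subset_right nbrIn_subset hd))
  rw [Finset.sum_union hd]
  simp only [hcard]
  rw [Finset.sum_add_distrib, Finset.sum_add_distrib]
  have := cross_comm (H := H) t s
  omega

lemma ec2_union_ge (hd : Disjoint s t) : ec2 H s + ec2 H t ≤ ec2 H (s ∪ t) := by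
  rw [ec2_union_split hd]; omega

lemma ec2_insert (hx : v ∉ s) :
    ec2 H (insert v s) = ec2 H s + 2 * (nbrIn H s v).card := by
  have h := ec2_union_split (H := H) (s := {v}) (t := s) (by simpa using hx)
  have h1 : ({v} : Finset V) ∪ s = insert v s := by ext; simp
  have h2 : ec2 H {v} = 0 := by
    simp [ec2, nbrIn, Finset.filter_singleton, H.irrefl]
  have h3 : ∑ a ∈ ({v} : Finset V), (nbrIn H s a).card = (nbrIn H s v).card := by simp
  rw [h1] at h; rw [h, h2, h3]; omega

lemma alphaIn_le_of_indep (hts : t ⊆ s) (hind : IsIndepFinset H t) : t.card ≤ alphaIn H s := by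
  apply Finset.le_sup
  simp [Finset.mem_filter, Finset.mem_powerset, hts, hind]

lemma alphaIn_spec (s : Finset V) :
    ∃ t ⊆ s, IsIndepFinset H t ∧ t.card = alphaIn H s := by
  have hne : (s.powerset.filter (fun t => IsIndepFinset H t)).Nonempty := by
    refine ⟨∅, ?_⟩
    exact Finset.mem_filter.2 ⟨Finset.empty_mem_powerset _, fun u hu => absurd hu (Finset.notMem_empty u)⟩
  obtain ⟨t, ht, hmax⟩ := Finset.exists_mem_eq_sup _ hne Finset.card
  rw [Finset.mem_filter, Finset.mem_powerset] at ht
  exact ⟨t, ht.1, ht.2, hmax.symm⟩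

lemma alphaIn_mono (hst : s ⊆ t) : alphaIn H s ≤ alphaIn H t := by
  obtain ⟨u, hu, hind, hcard⟩ := alphaIn_spec (H := H) s
  rw [← hcard]; exact alphaIn_le_of_indep (hu.trans hst) hind

lemma alphaIn_le_card : alphaIn H s ≤ s.card := by
  obtain ⟨u, hu, _, hcard⟩ := alphaIn_spec (H := H) s
  rw [← hcard]; exact Finset.card_le_card hu

/-- adding `v` whose closed neighborhood in `s` was removed -/
lemma alphaIn_step (hv : v ∈ s) :
    alphaIn H (s \ insert v (nbrIn H s v)) + 1 ≤ alphaIn H s := by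
  obtain ⟨u, hu, hind, hcard⟩ := alphaIn_spec (H := H) (s \ insert v (nbrIn H s v))
  have hvnu : v ∉ u := fun h => by
    have := hu h; rw [Finset.mem_sdiff] at this; exact this.2 (Finset.mem_insert_self _ _)
  have h1 : IsIndepFinset H (insert v u) := by
    intro a ha b hb hab
    rcases Finset.mem_insert.1 ha with rfl | ha'
    · rcases Finset.mem_insert.1 hb with rfl | hb'
      · exact absurd rfl hab
      · intro hadj
        have := hu hb'; rw [Finset.mem_sdiff] at this
        exact this.2 (Finset.mem_insert.2 (Or.inr (mem_nbrIn.2 ⟨this.1, hadj⟩)))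
    · rcases Finset.mem_insert.1 hb with rfl | hb'
      · intro hadj
        have := hu ha'; rw [Finset.mem_sdiff] at this
        exact this.2 (Finset.mem_insert.2 (Or.inr (mem_nbrIn.2 ⟨this.1, hadj.symm⟩)))
      · exact hind a ha' b hb' hab
  have h2 : insert v u ⊆ s := by
    intro x hx
    rcases Finset.mem_insert.1 hx with rfl | hx'
    · exact hv
    · exact (Finset.sdiff_subset (hu hx'))
  have := alphaIn_le_of_indep h2 h1
  rw [Finset.card_insert_of_notMem hvnu] at this
  omega

lemma ec2_sdiff_identity {W : Finset V} (hWs : W ⊆ s) :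
    ec2 H s + ec2 H W = ec2 H (s \ W) + 2 * ∑ a ∈ W, (nbrIn H s a).card := by
  have hd : Disjoint (s \ W) W := Finset.sdiff_disjoint
  have hu : (s \ W) ∪ W = s := Finset.sdiff_union_of_subset hWs
  have h := ec2_union_split (H := H) hd
  rw [hu] at h
  have hx : ∀ a ∈ W, (nbrIn H s a).card = (nbrIn H (s \ W) a).card + (nbrIn H W a).card := by
    intro a _
    have : nbrIn H s a = nbrIn H (s \ W) a ∪ nbrIn H W a := by
      ext x
      simp only [mem_nbrIn, Finset.mem_union, Finset.mem_sdiff]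
      constructor
      · rintro ⟨hxs, hadj⟩
        by_cases hxW : x ∈ W
        · exact Or.inr ⟨hxW, hadj⟩
        · exact Or.inl ⟨⟨hxs, hxW⟩, hadj⟩
      · rintro (⟨⟨hxs, _⟩, hadj⟩ | ⟨hxW, hadj⟩)
        · exact ⟨hxs, hadj⟩
        · exact ⟨hWs hxW, hadj⟩
    rw [this, Finset.card_union_of_disjoint]
    exact Finset.disjoint_of_subset_left nbrIn_subset
      (Finset.disjoint_of_subset_right nbrIn_subset Finset.sdiff_disjoint)
  rw [Finset.sum_congr rfl hx, Finset.sum_add_distrib]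
  have hcc := cross_comm (H := H) (s \ W) W
  unfold ec2 at *
  omega

lemma ec2_le_max : ec2 H s ≤ s.card * (s.card - 1) := by
  unfold ec2
  calc ∑ v ∈ s, (nbrIn H s v).card ≤ ∑ v ∈ s, (s.card - 1) :=
        Finset.sum_le_sum (fun v hv => card_nbrIn_lt hv)
    _ = s.card * (s.card - 1) := by rw [Finset.sum_const, smul_eq_mul]

/-- Lemma D : for every subset, `4|s| ≤ 6 α(s) + ec2(s)`. -/
lemma lemD_aux (H : SimpleGraph V) (n : ℕ) :
    ∀ s : Finset V, s.card = n → 4 * s.card ≤ 6 * alphaIn H s + ec2 H s := by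
  induction n using Nat.strong_induction_on with
  | _ n IH =>
  intro s hn
  rcases Finset.eq_empty_or_nonempty s with rfl | hne
  · simp
  obtain ⟨v, hv, hmin⟩ := Finset.exists_min_image s (fun v => (nbrIn H s v).card) hne
  set d := (nbrIn H s v).card with hd
  set W := insert v (nbrIn H s v) with hW
  have hWs : W ⊆ s := by
    intro x hx; rcases Finset.mem_insert.1 hx with rfl | hx'
    · exact hv
    · exact nbrIn_subset hx'
  have hWcard : W.card = d + 1 := by
    rw [hW, Finset.card_insert_of_notMem not_mem_nbrIn_self]
  have hssub : (s \ W).card = s.card - (d + 1) := by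
    rw [Finset.card_sdiff_of_subset hWs, hWcard]
  have hlt : (s \ W).card < s.card := by
    have : 0 < s.card := Finset.card_pos.2 hne
    have := Finset.card_le_card hWs
    omega
  have hIH := IH (s \ W).card (hn ▸ hlt) (s \ W) rfl
  have hstep := alphaIn_step (H := H) hv
  have hid := ec2_sdiff_identity (H := H) hWs
  have hsum : ∑ a ∈ W, (nbrIn H s a).card ≥ (d + 1) * d := by
    calc (d+1) * d = ∑ _a ∈ W, d := by rw [Finset.sum_const, smul_eq_mul, hWcard]
      _ ≤ ∑ a ∈ W, (nbrIn H s a).card :=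
          Finset.sum_le_sum (fun a ha => hmin a (hWs ha))
  have hecW : ec2 H W ≤ (d + 1) * d := by
    have := ec2_le_max (H := H) (s := W)
    rw [hWcard] at this; simpa using this
  have hcardW := Finset.card_le_card hWs
  rw [hWcard] at hcardW
  -- combine
  have hP : (d + 1) * d = d * d + d := by ring
  rw [hP] at hsum hecW
  have key : ec2 H (s \ W) + (d * d + d) ≤ ec2 H s := by linarith
  have hquad : 3 * d ≤ d * d + 2 := by
    rcases Nat.lt_or_ge d 3 with h | h
    · interval_cases d <;> omega
    · have := Nat.mul_le_mul_right d h; omega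
  have halpha : alphaIn H (s \ W) + 1 ≤ alphaIn H s := hstep
  have hs4 : s.card = (s \ W).card + d + 1 := by omega
  linarith [hIH, halpha, hquad, key, hs4]

/-- `2 α(s) + ec2(s) ≥ 2|s|`. -/
lemma lemSimple_aux (H : SimpleGraph V) (n : ℕ) :
    ∀ s : Finset V, s.card = n → 2 * s.card ≤ 2 * alphaIn H s + ec2 H s := by
  induction n using Nat.strong_induction_on with
  | _ n IH =>
  intro s hn
  by_cases hind : IsIndepFinset H s
  · have := alphaIn_le_of_indep (H := H) (Finset.Subset.refl s) hind
    omega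
  · -- there is a vertex with a neighbor in s
    have : ∃ v ∈ s, (nbrIn H s v).card ≥ 1 := by
      by_contra hc
      push_neg at hc
      refine hind (fun a ha b hb hab hadj => ?_)
      have : b ∈ nbrIn H s a := mem_nbrIn.2 ⟨hb, hadj⟩
      have h1 := hc a ha
      have : (nbrIn H s a).Nonempty := ⟨b, this⟩
      rw [← Finset.card_pos] at this
      omega
    obtain ⟨v, hv, hdeg⟩ := this
    have hWs : ({v} : Finset V) ⊆ s := Finset.singleton_subset_iff.2 hv
    have hid := ec2_sdiff_identity (H := H) hWs
    have hec2v : ec2 H {v} = 0 := by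
      simp [ec2, nbrIn, Finset.filter_singleton, H.irrefl]
    have hsum : ∑ a ∈ ({v} : Finset V), (nbrIn H s a).card = (nbrIn H s v).card := by simp
    have hcard : (s \ {v}).card = s.card - 1 := by
      rw [Finset.card_sdiff_of_subset hWs]; simp
    have hlt : (s \ {v}).card < s.card := by
      have : 0 < s.card := Finset.card_pos.2 ⟨v, hv⟩
      omega
    have hIH := IH (s \ {v}).card (hn ▸ hlt) (s \ {v}) rfl
    have halpha : alphaIn H (s \ {v}) ≤ alphaIn H s := alphaIn_mono (Finset.sdiff_subset)
    have hvpos : 0 < s.card := Finset.card_pos.2 ⟨v, hv⟩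
    omega

lemma lemD (H : SimpleGraph V) (s : Finset V) : 4 * s.card ≤ 6 * alphaIn H s + ec2 H s :=
  lemD_aux H s.card s rfl

lemma lemSimple (H : SimpleGraph V) (s : Finset V) : 2 * s.card ≤ 2 * alphaIn H s + ec2 H s :=
  lemSimple_aux H s.card s rfl

/-! ## Components -/

noncomputable def compOf (H : SimpleGraph V) (v : V) : Finset V :=
  Finset.univ.filter (fun w => H.Reachable v w)

lemma mem_compOf : w ∈ compOf H v ↔ H.Reachable v w := by
  simp [compOf]

lemma self_mem_compOf : v ∈ compOf H v := mem_compOf.2 (Reachable.refl v)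

lemma compOf_nonempty : (compOf H v).Nonempty := ⟨v, self_mem_compOf⟩

lemma compOf_eq_of_mem (hw : w ∈ compOf H v) : compOf H w = compOf H v := by
  rw [mem_compOf] at hw
  ext x; rw [mem_compOf, mem_compOf]
  exact ⟨fun h => hw.trans h, fun h => hw.symm.trans h⟩

lemma not_adj_of_not_mem_compOf (hu : w ∈ compOf H v) {x : V} (hx : x ∉ compOf H v) :
    ¬ H.Adj w x := fun hadj =>
  hx (mem_compOf.2 ((mem_compOf.1 hu).trans hadj.reachable))

/-- growing a connected chunk inside a component -/
lemma chunk_exists (H : SimpleGraph V) (v : V) :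
    ∀ m : ℕ, 1 ≤ m → m ≤ (compOf H v).card →
    ∃ S ⊆ compOf H v, v ∈ S ∧ S.card = m ∧ 2 * m ≤ ec2 H S + 2 := by
  intro m
  induction m with
  | zero => omega
  | succ m IH =>
    intro _ hm
    rcases Nat.eq_or_lt_of_le (Nat.one_le_iff_ne_zero.2 (Nat.succ_ne_zero m)) with h1 | h1
    · refine ⟨{v}, Finset.singleton_subset_iff.2 self_mem_compOf, Finset.mem_singleton_self v, ?_, ?_⟩
      · rw [Finset.card_singleton]; omega
      · have : ec2 H ({v} : Finset V) = 0 := by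
          simp [ec2, nbrIn, Finset.filter_singleton, H.irrefl]
        omega
    · -- m ≥ 1
      obtain ⟨S, hS, hvS, hcard, hec⟩ := IH (by omega) (by omega)
      -- find boundary vertex
      have hex : ∃ w ∈ compOf H v, w ∉ S := by
        by_contra hc
        push_neg at hc
        have hsub2 : compOf H v ⊆ S := fun x hx => hc x hx
        have := Finset.card_le_card hsub2
        omega
      obtain ⟨w, hwC, hwS⟩ := hex
      have hreach : H.Reachable v w := mem_compOf.1 hwC
      obtain ⟨p⟩ := hreach
      obtain ⟨dd, hdd, hd1, hd2⟩ := p.exists_boundary_dart (↑S : Set V) (by exact_mod_cast hvS)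
        (by exact_mod_cast hwS)
      have hfst : dd.toProd.1 ∈ S := by exact_mod_cast hd1
      have hsnd : dd.toProd.2 ∉ S := by exact_mod_cast hd2
      have hadj : H.Adj dd.toProd.1 dd.toProd.2 := dd.adj
      have hsndC : dd.toProd.2 ∈ compOf H v := by
        rw [mem_compOf]
        exact (mem_compOf.1 (hS hfst)).trans hadj.reachable
      refine ⟨insert dd.toProd.2 S, ?_, Finset.mem_insert_of_mem hvS, ?_, ?_⟩
      · intro x hx
        rcases Finset.mem_insert.1 hx with rfl | hx'
        · exact hsndC
        · exact hS hx'
      · rw [Finset.card_insert_of_notMem hsnd, hcard]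
      · rw [ec2_insert hsnd]
        have : dd.toProd.1 ∈ nbrIn H S dd.toProd.2 := mem_nbrIn.2 ⟨hfst, hadj.symm⟩
        have hpos : 1 ≤ (nbrIn H S dd.toProd.2).card := Finset.card_pos.2 ⟨_, this⟩
        omega

lemma walk_getVert_le (H : SimpleGraph V) {u v : V} (p : H.Walk u v) (i : ℕ) :
    ∃ q : H.Walk u (p.getVert i), q.length ≤ i := by
  induction p generalizing i with
  | nil => exact ⟨SimpleGraph.Walk.nil, by simp⟩
  | @cons a b c hab q IH =>
    cases i with
    | zero => exact ⟨SimpleGraph.Walk.nil, le_of_eq rfl⟩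
    | succ i =>
      obtain ⟨q', hq'⟩ := IH i
      have h1 : (SimpleGraph.Walk.cons hab q).getVert (i+1) = q.getVert i := rfl
      rw [h1]
      exact ⟨SimpleGraph.Walk.cons hab q', by simp [SimpleGraph.Walk.length_cons]; omega⟩

lemma dist_getVert_le (H : SimpleGraph V) {u v : V} (p : H.Walk u v) (i : ℕ) :
    H.dist u (p.getVert i) ≤ i := by
  obtain ⟨q, hq⟩ := walk_getVert_le H p i
  exact le_trans (SimpleGraph.dist_le q) hq

lemma exists_parent (hu : w ∈ compOf H v) (hne : w ≠ v) :
    ∃ x, H.Adj x w ∧ x ∈ compOf H v ∧ H.dist v x + 1 = H.dist v w := by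
  have hreach : H.Reachable v w := mem_compOf.1 hu
  have hd0 : H.dist v w ≠ 0 := by
    rw [SimpleGraph.dist_ne_zero_iff_ne_and_reachable]
    exact ⟨hne.symm, hreach⟩
  obtain ⟨p, hp⟩ := hreach.exists_walk_length_eq_dist
  set d := H.dist v w with hdd
  have hd1 : 1 ≤ d := by omega
  set x := p.getVert (d - 1) with hx
  have hadj : H.Adj x w := by
    have h1 : d - 1 < p.length := by omega
    have := SimpleGraph.Walk.adj_getVert_succ p h1
    have h2 : d - 1 + 1 = p.length := by omega
    rw [h2] at this
    rw [SimpleGraph.Walk.getVert_length] at this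
    exact this
  have hle : H.dist v x ≤ d - 1 := dist_getVert_le H p (d - 1)
  have hge : d ≤ H.dist v x + 1 := by
    have hrvx : H.Reachable v x := hreach.trans hadj.symm.reachable
    obtain ⟨pw, hpw⟩ := hrvx.exists_walk_length_eq_dist
    have hwalk : (pw.concat hadj).length = H.dist v x + 1 := by
      rw [SimpleGraph.Walk.length_concat, hpw]
    calc d = H.dist v w := rfl
      _ ≤ (pw.concat hadj).length := SimpleGraph.dist_le _
      _ = H.dist v x + 1 := hwalk
  refine ⟨x, hadj, ?_, by omega⟩
  rw [mem_compOf]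
  exact hreach.trans hadj.symm.reachable

lemma ec2_eq_card_pairs (H : SimpleGraph V) (s : Finset V) :
    ec2 H s = ((s ×ˢ s).filter (fun z => H.Adj z.1 z.2)).card := by
  rw [Finset.card_eq_sum_card_fiberwise (f := Prod.fst) (t := s)
    (fun z hz => (Finset.mem_product.1 (Finset.mem_filter.1 hz).1).1)]
  unfold ec2
  refine Finset.sum_congr rfl (fun a ha => ?_)
  refine (Finset.card_bij (fun z _ => z.2) ?_ ?_ ?_).symm
  · intro z hz
    simp only [Finset.mem_filter, Finset.mem_product] at hz
    rw [mem_nbrIn]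
    rcases hz with ⟨⟨⟨_, h2⟩, hadj⟩, h1⟩
    rw [h1] at hadj
    exact ⟨h2, hadj⟩
  · intro z1 h1 z2 h2 heq
    simp only [Finset.mem_filter] at h1 h2
    exact Prod.ext (h1.2.trans h2.2.symm) heq
  · intro b hb
    rw [mem_nbrIn] at hb
    refine ⟨(a, b), ?_, rfl⟩
    simp only [Finset.mem_filter, Finset.mem_product]
    exact ⟨⟨⟨ha, hb.1⟩, hb.2⟩, trivial⟩

noncomputable def par (H : SimpleGraph V) (v u : V) : V :=
  if h : u ∈ compOf H v ∧ u ≠ v then (exists_parent h.1 h.2).choose else v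

lemma par_spec (h1 : w ∈ compOf H v) (h2 : w ≠ v) :
    H.Adj (par H v w) w ∧ par H v w ∈ compOf H v ∧ H.dist v (par H v w) + 1 = H.dist v w := by
  rw [par, dif_pos ⟨h1, h2⟩]
  exact (exists_parent h1 h2).choose_spec

/-- a deficient component has many edges -/
lemma comp_defic (H : SimpleGraph V) (v : V)
    (hdef : 2 * alphaIn H (compOf H v) + 1 ≤ (compOf H v).card) :
    2 * (compOf H v).card ≤ ec2 H (compOf H v) := by
  set C := compOf H v with hC
  set A := C.filter (fun w => Even (H.dist v w)) with hA
  set B := C.filter (fun w => ¬ Even (H.dist v w)) with hB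
  have hAB : A.card + B.card = C.card := Finset.card_filter_add_card_filter_not _
  -- some class is not independent
  have hnotboth : ¬ (IsIndepFinset H A ∧ IsIndepFinset H B) := by
    rintro ⟨hIA, hIB⟩
    have h1 : A.card ≤ alphaIn H C :=
      alphaIn_le_of_indep (by rw [hA]; exact Finset.filter_subset _ _) hIA
    have h2 : B.card ≤ alphaIn H C :=
      alphaIn_le_of_indep (by rw [hB]; exact Finset.filter_subset _ _) hIB
    omega
  have hxy : ∃ x y, x ∈ C ∧ y ∈ C ∧ x ≠ y ∧ H.Adj x y ∧
      (Even (H.dist v x) ↔ Even (H.dist v y)) := by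
    rcases not_and_or.1 hnotboth with h | h
    · rw [IsIndepFinset] at h
      push_neg at h
      obtain ⟨x, hx, y, hy, hne, hadj⟩ := h
      rw [hA, Finset.mem_filter] at hx hy
      exact ⟨x, y, hx.1, hy.1, hne, hadj, by tauto⟩
    · rw [IsIndepFinset] at h
      push_neg at h
      obtain ⟨x, hx, y, hy, hne, hadj⟩ := h
      rw [hB, Finset.mem_filter] at hx hy
      exact ⟨x, y, hx.1, hy.1, hne, hadj, by tauto⟩
  obtain ⟨x, y, hxC, hyC, hxyne, hxyadj, hpar⟩ := hxy
  set T := ((C ×ˢ C).filter (fun z => H.Adj z.1 z.2)) with hT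
  set X₁ := (C.erase v).image (fun u => (u, par H v u)) with hX₁
  set X₂ := (C.erase v).image (fun u => (par H v u, u)) with hX₂
  set E2 : Finset (V × V) := {(x, y), (y, x)} with hE2
  -- membership properties
  have hmem1 : ∀ z ∈ X₁, z ∈ T ∧ H.dist v z.2 + 1 = H.dist v z.1 := by
    intro z hz
    rw [hX₁, Finset.mem_image] at hz
    obtain ⟨u, hu, rfl⟩ := hz
    rw [Finset.mem_erase] at hu
    obtain ⟨hadj, hmem, hdist⟩ := par_spec (H := H) hu.2 hu.1
    constructor
    · rw [hT, Finset.mem_filter, Finset.mem_product]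
      exact ⟨⟨hu.2, hmem⟩, hadj.symm⟩
    · exact hdist
  have hmem2 : ∀ z ∈ X₂, z ∈ T ∧ H.dist v z.1 + 1 = H.dist v z.2 := by
    intro z hz
    rw [hX₂, Finset.mem_image] at hz
    obtain ⟨u, hu, rfl⟩ := hz
    rw [Finset.mem_erase] at hu
    obtain ⟨hadj, hmem, hdist⟩ := par_spec (H := H) hu.2 hu.1
    constructor
    · rw [hT, Finset.mem_filter, Finset.mem_product]
      exact ⟨⟨hmem, hu.2⟩, hadj⟩
    · exact hdist
  have hmemE : ∀ z ∈ E2, z ∈ T ∧ (Even (H.dist v z.1) ↔ Even (H.dist v z.2)) := by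
    intro z hz
    rw [hE2, Finset.mem_insert, Finset.mem_singleton] at hz
    rcases hz with rfl | rfl
    · exact ⟨by rw [hT, Finset.mem_filter, Finset.mem_product]; exact ⟨⟨hxC, hyC⟩, hxyadj⟩, hpar⟩
    · exact ⟨by rw [hT, Finset.mem_filter, Finset.mem_product]; exact ⟨⟨hyC, hxC⟩, hxyadj.symm⟩,
        hpar.symm⟩
  -- cards
  have hcard1 : X₁.card = C.card - 1 := by
    rw [hX₁, Finset.card_image_of_injective _ (fun a b hab => congrArg Prod.fst hab),
      Finset.card_erase_of_mem (by rw [hC]; exact self_mem_compOf)]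
  have hcard2 : X₂.card = C.card - 1 := by
    rw [hX₂, Finset.card_image_of_injective _ (fun a b hab => congrArg Prod.snd hab),
      Finset.card_erase_of_mem (by rw [hC]; exact self_mem_compOf)]
  have hcardE : E2.card = 2 := by
    rw [hE2, Finset.card_insert_of_notMem (by simp [Prod.ext_iff, hxyne]),
      Finset.card_singleton]
  -- disjointness
  have hd12 : Disjoint X₁ X₂ := by
    rw [Finset.disjoint_left]
    intro z h1 h2
    have e1 := (hmem1 z h1).2
    have e2 := (hmem2 z h2).2
    omega
  have hd1E : Disjoint X₁ E2 := by
    rw [Finset.disjoint_left]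
    intro z h1 h2
    have e1 := (hmem1 z h1).2
    have e2 := (hmemE z h2).2
    rw [Nat.even_iff, Nat.even_iff] at e2
    omega
  have hd2E : Disjoint X₂ E2 := by
    rw [Finset.disjoint_left]
    intro z h1 h2
    have e1 := (hmem2 z h1).2
    have e2 := (hmemE z h2).2
    rw [Nat.even_iff, Nat.even_iff] at e2
    omega
  have hsub : X₁ ∪ X₂ ∪ E2 ⊆ T := by
    intro z hz
    rcases Finset.mem_union.1 hz with hz' | hz'
    · rcases Finset.mem_union.1 hz' with h | h
      · exact (hmem1 z h).1
      · exact (hmem2 z h).1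
    · exact (hmemE z hz').1
  have hTcard : (C.card - 1) + (C.card - 1) + 2 ≤ T.card := by
    have h1 : (X₁ ∪ X₂ ∪ E2).card = X₁.card + X₂.card + E2.card := by
      rw [Finset.card_union_of_disjoint, Finset.card_union_of_disjoint hd12]
      rw [Finset.disjoint_union_left]
      exact ⟨hd1E, hd2E⟩
    have := Finset.card_le_card hsub
    omega
  have hCpos : 1 ≤ C.card := Finset.card_pos.2 ⟨v, by rw [hC]; exact self_mem_compOf⟩
  rw [ec2_eq_card_pairs, ← hT]
  omega

lemma comps_disjoint {v₁ v₂ : V} (hne : compOf H v₁ ≠ compOf H v₂) :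
    Disjoint (compOf H v₁) (compOf H v₂) := by
  rw [Finset.disjoint_left]
  intro x h1 h2
  exact hne ((compOf_eq_of_mem h1).symm.trans (compOf_eq_of_mem h2))

lemma comps_noadj {v₁ v₂ : V} (hne : compOf H v₁ ≠ compOf H v₂)
    (ha : w ∈ compOf H v₁) {x : V} (hb : x ∈ compOf H v₂) : ¬ H.Adj w x := by
  intro hadj
  have : x ∈ compOf H v₁ := mem_compOf.2 ((mem_compOf.1 ha).trans hadj.reachable)
  exact (Finset.disjoint_left.1 (comps_disjoint hne) this) hb

lemma alphaIn_union_of_noadj (hd : Disjoint s t)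
    (hna : ∀ a ∈ s, ∀ b ∈ t, ¬ H.Adj a b) :
    alphaIn H s + alphaIn H t ≤ alphaIn H (s ∪ t) := by
  obtain ⟨t₁, ht₁, hi₁, hc₁⟩ := alphaIn_spec (H := H) s
  obtain ⟨t₂, ht₂, hi₂, hc₂⟩ := alphaIn_spec (H := H) t
  have hdisj : Disjoint t₁ t₂ :=
    Finset.disjoint_of_subset_left ht₁ (Finset.disjoint_of_subset_right ht₂ hd)
  have hind : IsIndepFinset H (t₁ ∪ t₂) := by
    intro a ha b hb hab
    rcases Finset.mem_union.1 ha with ha' | ha' <;> rcases Finset.mem_union.1 hb with hb' | hb'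
    · exact hi₁ a ha' b hb' hab
    · exact hna a (ht₁ ha') b (ht₂ hb')
    · intro hadj; exact hna b (ht₁ hb') a (ht₂ ha') hadj.symm
    · exact hi₂ a ha' b hb' hab
  have := alphaIn_le_of_indep (Finset.union_subset_union ht₁ ht₂) hind
  rw [Finset.card_union_of_disjoint hdisj] at this
  omega

/-- sum of alphas over a family of components bounds alpha of the union -/
lemma alpha_family (H : SimpleGraph V) :
    ∀ F : Finset (Finset V), (∀ C ∈ F, ∃ v, C = compOf H v) →
    ∑ C ∈ F, alphaIn H C ≤ alphaIn H (F.biUnion id) := by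
  intro F
  induction F using Finset.induction_on with
  | empty => simp
  | @insert C F hC IH =>
    intro hcomp
    have hCc := hcomp C (Finset.mem_insert_self _ _)
    obtain ⟨v, rfl⟩ := hCc
    have hrest : ∀ C' ∈ F, ∃ v, C' = compOf H v := fun C' h => hcomp C' (Finset.mem_insert_of_mem h)
    have hd : Disjoint (compOf H v) (F.biUnion id) := by
      rw [Finset.disjoint_right]
      intro x hx hxC
      rw [Finset.mem_biUnion] at hx
      obtain ⟨C', hC', hxC'⟩ := hx
      obtain ⟨v', rfl⟩ := hrest C' hC'
      have hne : compOf H v ≠ compOf H v' := fun h => hC (h ▸ hC')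
      exact (Finset.disjoint_left.1 (comps_disjoint hne) hxC) hxC'
    have hna : ∀ a ∈ compOf H v, ∀ b ∈ F.biUnion id, ¬ H.Adj a b := by
      intro a ha b hb
      rw [Finset.mem_biUnion] at hb
      obtain ⟨C', hC', hbC'⟩ := hb
      obtain ⟨v', rfl⟩ := hrest C' hC'
      have hne : compOf H v ≠ compOf H v' := fun h => hC (h ▸ hC')
      exact comps_noadj hne ha hbC'
    rw [Finset.sum_insert hC, Finset.biUnion_insert]
    calc alphaIn H (compOf H v) + ∑ C' ∈ F, alphaIn H C'
        ≤ alphaIn H (compOf H v) + alphaIn H (F.biUnion id) := by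
          have := IH hrest; omega
      _ ≤ alphaIn H (compOf H v ∪ F.biUnion id) := alphaIn_union_of_noadj hd hna

lemma ec2_family (H : SimpleGraph V) :
    ∀ F : Finset (Finset V), (∀ C ∈ F, ∃ v, C = compOf H v) →
    ∑ C ∈ F, ec2 H C ≤ ec2 H (F.biUnion id) := by
  intro F
  induction F using Finset.induction_on with
  | empty => simp [ec2]
  | @insert C F hC IH =>
    intro hcomp
    obtain ⟨v, rfl⟩ := hcomp C (Finset.mem_insert_self _ _)
    have hrest : ∀ C' ∈ F, ∃ v, C' = compOf H v := fun C' h => hcomp C' (Finset.mem_insert_of_mem h)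
    have hd : Disjoint (compOf H v) (F.biUnion id) := by
      rw [Finset.disjoint_right]
      intro x hx hxC
      rw [Finset.mem_biUnion] at hx
      obtain ⟨C', hC', hxC'⟩ := hx
      obtain ⟨v', rfl⟩ := hrest C' hC'
      have hne : compOf H v ≠ compOf H v' := fun h => hC (h ▸ hC')
      exact (Finset.disjoint_left.1 (comps_disjoint hne) hxC) hxC'
    rw [Finset.sum_insert hC, Finset.biUnion_insert]
    calc ec2 H (compOf H v) + ∑ C' ∈ F, ec2 H C'
        ≤ ec2 H (compOf H v) + ec2 H (F.biUnion id) := by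
          have := IH hrest; omega
      _ ≤ ec2 H (compOf H v ∪ F.biUnion id) := ec2_union_ge hd

lemma biUnion_disjoint_of_comps {F : Finset (Finset V)} {C : Finset V}
    (hcomp : ∀ C' ∈ F, ∃ v, C' = compOf H v) (hCF : C ∉ F) {v : V} (hC : C = compOf H v) :
    Disjoint (F.biUnion id) C := by
  rw [Finset.disjoint_left]
  intro x hx hxC
  rw [Finset.mem_biUnion] at hx
  obtain ⟨C', hC', hxC'⟩ := hx
  obtain ⟨v', rfl⟩ := hcomp C' hC'
  subst hC
  have hne : compOf H v' ≠ compOf H v := fun h => hCF (h ▸ hC')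
  exact (Finset.disjoint_left.1 (comps_disjoint hne) hxC') hxC

/-- greedy assembly, deficient components: n-1 edges among n vertices -/
lemma greedy1 (H : SimpleGraph V) :
    ∀ F : Finset (Finset V),
    (∀ C ∈ F, (∃ v, C = compOf H v) ∧ 2 * C.card ≤ ec2 H C) →
    ∀ m, 1 ≤ m → m ≤ ∑ C ∈ F, C.card →
    ∃ S, S ⊆ F.biUnion id ∧ S.card = m ∧ 2 * m ≤ ec2 H S + 2 := by
  intro F
  induction F using Finset.strongInduction with
  | _ F IH =>
    intro hprop m hm1 hmle
    have hFne : F.Nonempty := by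
      rcases Finset.eq_empty_or_nonempty F with rfl | h
      · simp at hmle; omega
      · exact h
    obtain ⟨C, hCF⟩ := hFne
    obtain ⟨⟨v, hCv⟩, hCcred⟩ := hprop C hCF
    rcases le_or_gt m C.card with hle | hlt
    · obtain ⟨S, hS, _, hcard, hec⟩ := chunk_exists H v m hm1 (by rw [← hCv]; exact hle)
      refine ⟨S, ?_, hcard, by omega⟩
      exact (hCv ▸ hS).trans (Finset.subset_biUnion_of_mem id hCF)
    · have hCpos : 1 ≤ C.card := by
        rw [hCv]; exact Finset.card_pos.2 compOf_nonempty
      have hsum : ∑ C' ∈ F.erase C, C'.card + C.card = ∑ C' ∈ F, C'.card := by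
        exact Finset.sum_erase_add F _ hCF
      have hrec := IH (F.erase C) (Finset.erase_ssubset hCF)
        (fun C' h => hprop C' (Finset.mem_of_mem_erase h)) (m - C.card)
        (by omega) (by omega)
      obtain ⟨S', hS', hcard', hec'⟩ := hrec
      have hd : Disjoint S' C := by
        refine Finset.disjoint_of_subset_left hS' ?_
        exact biUnion_disjoint_of_comps (fun C' h => (hprop C' (Finset.mem_of_mem_erase h)).1)
          (Finset.notMem_erase C F) hCv
      refine ⟨S' ∪ C, ?_, ?_, ?_⟩
      · refine Finset.union_subset ?_ (Finset.subset_biUnion_of_mem id hCF)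
        exact hS'.trans (Finset.biUnion_subset_biUnion_of_subset_left id (Finset.erase_subset _ _))
      · rw [Finset.card_union_of_disjoint hd, hcard']; omega
      · have := ec2_union_ge (H := H) hd
        omega

/-- greedy assembly, filler components (each of size ≥ 2): m-1 edges among m vertices -/
lemma greedy2 (H : SimpleGraph V) :
    ∀ F : Finset (Finset V),
    (∀ C ∈ F, (∃ v, C = compOf H v) ∧ 2 ≤ C.card) →
    ∀ m, m ≤ ∑ C ∈ F, C.card →
    ∃ S, S ⊆ F.biUnion id ∧ S.card = m ∧ m ≤ ec2 H S + 1 := by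
  intro F
  induction F using Finset.strongInduction with
  | _ F IH =>
    intro hprop m hmle
    rcases Nat.eq_zero_or_pos m with rfl | hm1
    · exact ⟨∅, Finset.empty_subset _, Finset.card_empty, by omega⟩
    have hFne : F.Nonempty := by
      rcases Finset.eq_empty_or_nonempty F with rfl | h
      · simp at hmle; omega
      · exact h
    obtain ⟨C, hCF⟩ := hFne
    obtain ⟨⟨v, hCv⟩, hCcred⟩ := hprop C hCF
    rcases le_or_gt m C.card with hle | hlt
    · obtain ⟨S, hS, _, hcard, hec⟩ := chunk_exists H v m hm1 (by rw [← hCv]; exact hle)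
      refine ⟨S, ?_, hcard, by omega⟩
      exact (hCv ▸ hS).trans (Finset.subset_biUnion_of_mem id hCF)
    · -- whole component credit : ec2 C ≥ 2*C.card - 2 ≥ C.card
      have hwhole : C.card ≤ ec2 H C := by
        obtain ⟨S, hS, _, hcard, hec⟩ := chunk_exists H v C.card (by omega)
          (by rw [← hCv])
        have := ec2_mono (H := H) (hCv ▸ hS)
        omega
      have hsum : ∑ C' ∈ F.erase C, C'.card + C.card = ∑ C' ∈ F, C'.card :=
        Finset.sum_erase_add F _ hCF
      have hrec := IH (F.erase C) (Finset.erase_ssubset hCF)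
        (fun C' h => hprop C' (Finset.mem_of_mem_erase h)) (m - C.card) (by omega)
      obtain ⟨S', hS', hcard', hec'⟩ := hrec
      have hd : Disjoint S' C := by
        refine Finset.disjoint_of_subset_left hS' ?_
        exact biUnion_disjoint_of_comps (fun C' h => (hprop C' (Finset.mem_of_mem_erase h)).1)
          (Finset.notMem_erase C F) hCv
      refine ⟨S' ∪ C, ?_, ?_, ?_⟩
      · refine Finset.union_subset ?_ (Finset.subset_biUnion_of_mem id hCF)
        exact hS'.trans (Finset.biUnion_subset_biUnion_of_subset_left id (Finset.erase_subset _ _))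
      · rw [Finset.card_union_of_disjoint hd, hcard']; omega
      · have := ec2_union_ge (H := H) hd
        omega

lemma mem_CS_comp {C : Finset V} (h : C ∈ Finset.univ.image (fun v => compOf H v)) :
    ∃ v, C = compOf H v := by
  rw [Finset.mem_image] at h
  obtain ⟨v, _, rfl⟩ := h
  exact ⟨v, rfl⟩

lemma CS_biUnion (H : SimpleGraph V) :
    (Finset.univ.image (fun v => compOf H v)).biUnion id = (Finset.univ : Finset V) := by
  ext x
  simp only [Finset.mem_biUnion, Finset.mem_univ, iff_true, id]
  exact ⟨compOf H x, Finset.mem_image.2 ⟨x, Finset.mem_univ x, rfl⟩, self_mem_compOf⟩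

lemma CS_pairwise (H : SimpleGraph V) {F : Finset (Finset V)}
    (hcomp : ∀ C ∈ F, ∃ v, C = compOf H v) :
    ∀ x ∈ F, ∀ y ∈ F, x ≠ y → Disjoint (id x) (id y) := by
  intro x hx y hy hne
  obtain ⟨vx, rfl⟩ := hcomp x hx
  obtain ⟨vy, rfl⟩ := hcomp y hy
  exact comps_disjoint hne

/-- Main structural lemma (Lemma E). -/
lemma lemE (H : SimpleGraph V) (n r : ℕ) (hn : n ≤ Fintype.card V) (hr : r + 2 ≤ n)
    (hi : ∀ s : Finset V, s.card = n → ec2 H s ≤ 2 * r) :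
    Fintype.card V + 1 ≤ 2 * alphaIn H (Finset.univ : Finset V) + (2 * r + 4 - n) / 3 := by
  set q := (2 * r + 4 - n) / 3 with hqdef
  have hq1 : 3 * q + (2 * r + 4 - n) % 3 = 2 * r + 4 - n := by
    rw [hqdef]; exact Nat.div_add_mod _ _
  have hq2 : (2 * r + 4 - n) % 3 < 3 := Nat.mod_lt _ (by norm_num)
  by_contra hcon
  push_neg at hcon
  rcases le_or_gt (ec2 H Finset.univ) (2 * r) with hec | hec
  · have hD := lemD H (Finset.univ : Finset V)
    rw [Finset.card_univ] at hD
    omega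
  -- many edges
  set CS := Finset.univ.image (fun v => compOf H v) with hCS
  have hcomp : ∀ C ∈ CS, ∃ v, C = compOf H v := fun C h => mem_CS_comp h
  have hsumcard : ∑ C ∈ CS, C.card = Fintype.card V := by
    have h := Finset.card_biUnion (CS_pairwise H hcomp)
    rw [CS_biUnion, Finset.card_univ] at h
    simpa using h.symm
  have hsumalpha : ∑ C ∈ CS, alphaIn H C ≤ alphaIn H Finset.univ := by
    have := alpha_family H CS hcomp
    rwa [CS_biUnion] at this
  set Defic := CS.filter (fun C => 2 * alphaIn H C + 1 ≤ C.card) with hDefic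
  have hcompD : ∀ C ∈ Defic, ∃ v, C = compOf H v :=
    fun C h => hcomp C (Finset.mem_filter.1 h).1
  set NegD := CS.filter (fun C => ¬(2 * alphaIn H C + 1 ≤ C.card)) with hNegD
  have hDT : q ≤ ∑ C ∈ Defic, (C.card - 2 * alphaIn H C) := by
    have hsplit : ∑ C ∈ Defic, C.card + ∑ C ∈ NegD, C.card = ∑ C ∈ CS, C.card :=
      Finset.sum_filter_add_sum_filter_not CS _ _
    have hsplita : ∑ C ∈ Defic, alphaIn H C + ∑ C ∈ NegD, alphaIn H C
        = ∑ C ∈ CS, alphaIn H C :=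
      Finset.sum_filter_add_sum_filter_not CS _ _
    have h1 : ∑ C ∈ NegD, C.card ≤ 2 * ∑ C ∈ NegD, alphaIn H C := by
      rw [Finset.mul_sum]
      refine Finset.sum_le_sum (fun C hC => ?_)
      have := (Finset.mem_filter.1 hC).2
      omega
    have h2 : ∑ C ∈ Defic, C.card
        ≤ ∑ C ∈ Defic, (C.card - 2 * alphaIn H C) + 2 * ∑ C ∈ Defic, alphaIn H C := by
      rw [Finset.mul_sum, ← Finset.sum_add_distrib]
      refine Finset.sum_le_sum (fun C hC => ?_)
      have := (Finset.mem_filter.1 hC).2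
      omega
    omega
  set P₁ := ∑ C ∈ Defic, C.card with hP₁
  clear_value P₁
  rcases le_or_gt n P₁ with hbig | hsmall
  · -- enough deficient vertices : dense n-set by greedy
    have hprop : ∀ C ∈ Defic, (∃ v, C = compOf H v) ∧ 2 * C.card ≤ ec2 H C := by
      intro C hC
      obtain ⟨v, rfl⟩ := hcompD C hC
      exact ⟨⟨v, rfl⟩, comp_defic H v (Finset.mem_filter.1 hC).2⟩
    obtain ⟨S, _, hScard, hSec⟩ := greedy1 H Defic hprop n (by omega)
      (by rw [← hP₁]; exact hbig)
    have := hi S hScard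
    omega
  · -- P₁ < n
    set S₀ := Defic.biUnion id with hS₀
    have hS₀card : S₀.card = P₁ := by
      rw [hP₁, hS₀]
      simpa using Finset.card_biUnion (CS_pairwise H hcompD)
    have hS₀ec : P₁ + 3 * q ≤ ec2 H S₀ := by
      have hfam := ec2_family H Defic hcompD
      have hper : ∀ C ∈ Defic, C.card + 3 * (C.card - 2 * alphaIn H C) ≤ ec2 H C := by
        intro C hC
        have hD := lemD H C
        have := (Finset.mem_filter.1 hC).2
        omega
      calc P₁ + 3 * q ≤ P₁ + 3 * ∑ C ∈ Defic, (C.card - 2 * alphaIn H C) := by omega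
        _ = ∑ C ∈ Defic, (C.card + 3 * (C.card - 2 * alphaIn H C)) := by
            rw [Finset.sum_add_distrib, Finset.mul_sum, hP₁]
        _ ≤ ∑ C ∈ Defic, ec2 H C := Finset.sum_le_sum hper
        _ ≤ ec2 H S₀ := hfam
    set Pool := CS.filter (fun C => ¬(2 * alphaIn H C + 1 ≤ C.card) ∧ 2 ≤ C.card) with hPool
    have hcompP : ∀ C ∈ Pool, ∃ v, C = compOf H v :=
      fun C h => hcomp C (Finset.mem_filter.1 h).1
    have hdisjDP : Disjoint S₀ (Pool.biUnion id) := by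
      rw [Finset.disjoint_left]
      intro x hx hx'
      rw [hS₀, Finset.mem_biUnion] at hx
      rw [Finset.mem_biUnion] at hx'
      obtain ⟨C₁, hC₁, hxC₁⟩ := hx
      obtain ⟨C₂, hC₂, hxC₂⟩ := hx'
      obtain ⟨v₁, rfl⟩ := hcompD C₁ hC₁
      obtain ⟨v₂, rfl⟩ := hcompP C₂ hC₂
      have heq : compOf H v₁ = compOf H v₂ :=
        (compOf_eq_of_mem hxC₁).symm.trans (compOf_eq_of_mem hxC₂)
      have h1 := (Finset.mem_filter.1 hC₁).2
      have h2 := (Finset.mem_filter.1 hC₂).2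
      rw [heq] at h1
      exact h2.1 h1
    rcases le_or_gt (n - P₁) (∑ C ∈ Pool, C.card) with hfill | hshort
    · have hprop2 : ∀ C ∈ Pool, (∃ v, C = compOf H v) ∧ 2 ≤ C.card := by
        intro C hC
        exact ⟨hcompP C hC, (Finset.mem_filter.1 hC).2.2⟩
      obtain ⟨T, hT, hTcard, hTec⟩ := greedy2 H Pool hprop2 (n - P₁) hfill
      have hd : Disjoint S₀ T := Finset.disjoint_of_subset_right hT hdisjDP
      have hScard : (S₀ ∪ T).card = n := by
        rw [Finset.card_union_of_disjoint hd, hS₀card, hTcard]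
        omega
      have hSec : ec2 H S₀ + ec2 H T ≤ ec2 H (S₀ ∪ T) := ec2_union_ge hd
      have hfin : ec2 H (S₀ ∪ T) ≤ 2 * r := hi _ hScard
      omega
    · -- everything with an edge is inside S₁
      set S₁ := S₀ ∪ Pool.biUnion id with hS₁
      have hS₁card : S₁.card < n := by
        rw [hS₁, Finset.card_union_of_disjoint hdisjDP, hS₀card,
          Finset.card_biUnion (CS_pairwise H hcompP)]
        simp only [id_eq]
        omega
      obtain ⟨S, hS₁S, _, hScard⟩ := Finset.exists_subsuperset_card_eq (n := n) (Finset.subset_univ S₁)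
        (by omega) (by rw [Finset.card_univ]; exact hn)
      have hnbr_sub : ∀ v : V, (nbrIn H Finset.univ v).Nonempty → v ∈ S₁ ∧
          nbrIn H Finset.univ v ⊆ S₁ := by
        intro v hne
        have hcard2 : 2 ≤ (compOf H v).card := by
          obtain ⟨w, hw⟩ := hne
          rw [mem_nbrIn] at hw
          refine Finset.one_lt_card.2 ⟨v, self_mem_compOf, w, ?_, ?_⟩
          · rw [mem_compOf]; exact hw.2.reachable
          · exact fun h => H.irrefl (h ▸ hw.2)
        have hCmem : compOf H v ∈ CS := Finset.mem_image.2 ⟨v, Finset.mem_univ v, rfl⟩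
        have hsub : compOf H v ⊆ S₁ := by
          by_cases hdef : 2 * alphaIn H (compOf H v) + 1 ≤ (compOf H v).card
          · refine Finset.Subset.trans ?_ Finset.subset_union_left
            rw [hS₀]
            exact Finset.subset_biUnion_of_mem id (Finset.mem_filter.2 ⟨hCmem, hdef⟩)
          · refine Finset.Subset.trans ?_ Finset.subset_union_right
            exact Finset.subset_biUnion_of_mem id (Finset.mem_filter.2 ⟨hCmem, hdef, hcard2⟩)
        constructor
        · exact hsub self_mem_compOf
        · intro w hw
          rw [mem_nbrIn] at hw
          exact hsub (mem_compOf.2 hw.2.reachable)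
      have hzero : ∀ v ∈ (Finset.univ : Finset V), v ∉ S₁ → (nbrIn H Finset.univ v).card = 0 := by
        intro v _ hv
        rcases Finset.eq_empty_or_nonempty (nbrIn H Finset.univ v) with he | hne
        · rw [he, Finset.card_empty]
        · exact absurd ((hnbr_sub v hne).1) hv
      have hstep1 : ec2 H Finset.univ = ∑ v ∈ S₁, (nbrIn H Finset.univ v).card :=
        (Finset.sum_subset (Finset.subset_univ S₁) hzero).symm
      have hstep2 : ∑ v ∈ S₁, (nbrIn H Finset.univ v).card ≤ ec2 H S₁ := by
        refine Finset.sum_le_sum (fun v hv => Finset.card_le_card (fun w hw => ?_))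
        have hne : (nbrIn H Finset.univ v).Nonempty := ⟨w, hw⟩
        exact mem_nbrIn.2 ⟨(hnbr_sub v hne).2 hw, (mem_nbrIn.1 hw).2⟩
      have hstep3 : ec2 H S₁ ≤ ec2 H S := ec2_mono hS₁S
      have := hi S hScard
      omega

lemma ec2_univ_le_of_closed {S : Finset V} (hcl : ∀ a b, H.Adj a b → a ∈ S) :
    ec2 H (Finset.univ : Finset V) ≤ ec2 H S := by
  have hzero : ∀ v ∈ (Finset.univ : Finset V), v ∉ S → (nbrIn H Finset.univ v).card = 0 := by
    intro v _ hv
    rcases Finset.eq_empty_or_nonempty (nbrIn H Finset.univ v) with he | hne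
    · rw [he, Finset.card_empty]
    · obtain ⟨w, hw⟩ := hne
      exact absurd (hcl v w (mem_nbrIn.1 hw).2) hv
  have hstep1 : ec2 H Finset.univ = ∑ v ∈ S, (nbrIn H Finset.univ v).card :=
    (Finset.sum_subset (Finset.subset_univ S) hzero).symm
  have hstep2 : ∑ v ∈ S, (nbrIn H Finset.univ v).card ≤ ec2 H S := by
    refine Finset.sum_le_sum (fun v hv => Finset.card_le_card (fun w hw => ?_))
    rw [mem_nbrIn] at hw
    exact mem_nbrIn.2 ⟨hcl w v hw.2.symm, hw.2⟩
  omega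

/-- extract a small vertex set carrying many edges -/
lemma dense_subset (H : SimpleGraph V) :
    ∀ j : ℕ, 2 * j ≤ ec2 H (Finset.univ : Finset V) →
    ∃ S : Finset V, S.card ≤ 2 * j ∧ 2 * j ≤ ec2 H S := by
  intro j
  induction j with
  | zero => exact fun _ => ⟨∅, by simp, by simp [ec2]⟩
  | succ j IH =>
    intro hj
    obtain ⟨S, hScard, hSec⟩ := IH (by omega)
    rcases le_or_gt (2 * (j + 1)) (ec2 H S) with hok | hlt
    · exact ⟨S, by omega, hok⟩
    · -- there is an edge not inside S
      have hex : ∃ a b, H.Adj a b ∧ b ∉ S := by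
        by_contra hc
        push_neg at hc
        have : ec2 H Finset.univ ≤ ec2 H S :=
          ec2_univ_le_of_closed (fun a b hab => hc b a hab.symm)
        omega
      obtain ⟨a, b, hab, hbS⟩ := hex
      by_cases haS : a ∈ S
      · refine ⟨insert b S, ?_, ?_⟩
        · rw [Finset.card_insert_of_notMem hbS]; omega
        · rw [ec2_insert hbS]
          have : a ∈ nbrIn H S b := mem_nbrIn.2 ⟨haS, hab.symm⟩
          have := Finset.card_pos.2 ⟨a, this⟩
          omega
      · have hbS' : b ∉ insert a S := by
          simp only [Finset.mem_insert]
          push_neg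
          exact ⟨fun h => H.irrefl (h ▸ hab), hbS⟩
        refine ⟨insert b (insert a S), ?_, ?_⟩
        · rw [Finset.card_insert_of_notMem hbS', Finset.card_insert_of_notMem haS]; omega
        · rw [ec2_insert hbS']
          have h1 : a ∈ nbrIn H (insert a S) b :=
            mem_nbrIn.2 ⟨Finset.mem_insert_self a S, hab.symm⟩
          have h2 := Finset.card_pos.2 ⟨a, h1⟩
          have h3 : ec2 H S ≤ ec2 H (insert a S) := ec2_mono (Finset.subset_insert a S)
          omega

lemma two_mul_edgeCount (G : SimpleGraph V) (s : Finset V) :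
    2 * edgeCount (G.induce (↑s : Set V)) = ec2 G s := by
  classical
  set Gi := G.induce (↑s : Set V) with hGi
  have h1 : edgeCount Gi = Gi.edgeFinset.card := by
    rw [edgeCount, Nat.card_eq_fintype_card, ← Set.toFinset_card]
    congr 1
  have h2 : ∑ v : (↑s : Set V), Gi.degree v = 2 * Gi.edgeFinset.card :=
    SimpleGraph.sum_degrees_eq_twice_card_edges Gi
  have h3 : ∀ v : (↑s : Set V), Gi.degree v = (nbrIn G s ↑v).card := by
    intro v
    rw [SimpleGraph.degree, SimpleGraph.neighborFinset]
    refine Finset.card_bij (fun w _ => (w : V)) ?_ ?_ ?_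
    · intro w hw
      rw [Set.mem_toFinset, SimpleGraph.mem_neighborSet] at hw
      exact Finset.mem_filter.2 ⟨by exact_mod_cast w.2, hw⟩
    · intro w1 h1 w2 h2 he
      exact Subtype.ext he
    · intro b hb
      rw [nbrIn, Finset.mem_filter] at hb
      refine ⟨⟨b, by exact_mod_cast hb.1⟩, ?_, rfl⟩
      rw [Set.mem_toFinset, SimpleGraph.mem_neighborSet]
      exact hb.2
  have h4 : ∑ v : (↑s : Set V), (nbrIn G s (↑v : V)).card = ∑ x ∈ s, (nbrIn G s x).card :=
    (Finset.sum_subtype s (fun x => Finset.mem_coe.symm) (fun x => (nbrIn G s x).card)).symm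
  calc 2 * edgeCount Gi = 2 * Gi.edgeFinset.card := by rw [h1]
    _ = ∑ v : (↑s : Set V), Gi.degree v := h2.symm
    _ = ∑ v : (↑s : Set V), (nbrIn G s (↑v : V)).card := Finset.sum_congr rfl (fun v _ => h3 v)
    _ = ∑ x ∈ s, (nbrIn G s x).card := h4
    _ = ec2 G s := rfl


lemma ec2_even (G : SimpleGraph V) (s : Finset V) : Even (ec2 G s) :=
  ⟨edgeCount (G.induce (↑s : Set V)), by rw [← two_mul_edgeCount]; ring⟩

lemma ec2_compl (G : SimpleGraph V) (s : Finset V) :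
    ec2 Gᶜ s + ec2 G s = s.card * (s.card - 1) := by
  unfold ec2
  rw [← Finset.sum_add_distrib]
  have h : ∀ v ∈ s, (nbrIn Gᶜ s v).card + (nbrIn G s v).card = s.card - 1 := by
    intro v hv
    have hsplit : nbrIn Gᶜ s v = (s.erase v) \ nbrIn G s v := by
      ext w
      constructor
      · intro hw
        rw [mem_nbrIn] at hw
        obtain ⟨hws, hwa⟩ := hw
        rw [SimpleGraph.compl_adj] at hwa
        refine Finset.mem_sdiff.2 ⟨Finset.mem_erase.2 ⟨fun h => hwa.1 h.symm, hws⟩, ?_⟩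
        exact fun hc => hwa.2 (mem_nbrIn.1 hc).2
      · intro hw
        obtain ⟨hwe, hwn⟩ := Finset.mem_sdiff.1 hw
        obtain ⟨hne, hws⟩ := Finset.mem_erase.1 hwe
        refine mem_nbrIn.2 ⟨hws, (SimpleGraph.compl_adj G v w).2 ⟨fun h => hne h.symm, ?_⟩⟩
        exact fun hadj => hwn (mem_nbrIn.2 ⟨hws, hadj⟩)
    have hsub : nbrIn G s v ⊆ s.erase v := by
      intro w hw
      rw [mem_nbrIn] at hw
      exact Finset.mem_erase.2 ⟨fun h => G.irrefl (h ▸ hw.2), hw.1⟩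
    rw [hsplit, Finset.card_sdiff_of_subset hsub, Finset.card_erase_of_mem hv]
    have := Finset.card_le_card hsub
    rw [Finset.card_erase_of_mem hv] at this
    omega
  rw [Finset.sum_congr rfl h, Finset.sum_const, smul_eq_mul, mul_comm]

lemma indep_ec2_zero {H : SimpleGraph V} {t : Finset V} (h : IsIndepFinset H t) :
    ec2 H t = 0 := by
  unfold ec2
  refine Finset.sum_eq_zero (fun v hv => ?_)
  rw [Finset.card_eq_zero]
  by_contra hc
  obtain ⟨w, hw⟩ := Finset.nonempty_of_ne_empty hc
  rw [mem_nbrIn] at hw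
  exact h v hv w hw.1 (fun he => H.irrefl (he ▸ hw.2)) hw.2

end Dev
section Constr

def flab (a b x : ℕ) : ℕ :=
  if x < 3 * a then x / 3
  else if x < 3 * a + 2 * b then a + (x - 3 * a) / 2
  else a + b + (x - 3 * a - 2 * b)

noncomputable def fGr (P a b : ℕ) : SimpleGraph (Fin P) :=
  SimpleGraph.fromRel (fun x y => flab a b x.val = flab a b y.val)

lemma fGr_adj {P a b : ℕ} {x y : Fin P} :
    (fGr P a b).Adj x y ↔ x ≠ y ∧ flab a b x.val = flab a b y.val := by
  rw [fGr, SimpleGraph.fromRel_adj]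
  constructor
  · rintro ⟨h1, h2 | h2⟩
    · exact ⟨h1, h2⟩
    · exact ⟨h1, h2.symm⟩
  · rintro ⟨h1, h2⟩
    exact ⟨h1, Or.inl h2⟩

lemma flab_low {a b x y : ℕ} (hx : x < 3 * a) (h : flab a b y = flab a b x) :
    y < 3 * a ∧ y / 3 = x / 3 := by
  unfold flab at h
  split_ifs at h <;> omega

lemma flab_mid {a b x y : ℕ} (hx1 : 3 * a ≤ x) (hx2 : x < 3 * a + 2 * b)
    (h : flab a b y = flab a b x) :
    3 * a ≤ y ∧ y < 3 * a + 2 * b ∧ (y - 3 * a) / 2 = (x - 3 * a) / 2 := by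
  unfold flab at h
  split_ifs at h <;> omega

lemma flab_high {a b x y : ℕ} (hx : 3 * a + 2 * b ≤ x) (h : flab a b y = flab a b x) :
    y = x := by
  unfold flab at h
  split_ifs at h <;> omega

lemma flab_lt {P a b x : ℕ} (hx : x < P) :
    flab a b x < a + b + (P - 3 * a - 2 * b) := by
  unfold flab
  split_ifs <;> omega

/-- the fiber of `x` -/
noncomputable def fib (P a b : ℕ) (x : Fin P) : Finset (Fin P) :=
  Finset.univ.filter (fun y : Fin P => flab a b y.val = flab a b x.val)

lemma fib_card_low {P a b : ℕ} {x : Fin P} (hx : x.val < 3 * a) : (fib P a b x).card ≤ 3 := by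
  have h := Finset.card_le_card_of_injOn (fun y : Fin P => y.val % 3)
    (s := fib P a b x) (t := Finset.range 3)
    (fun y _ => Finset.mem_range.2 (Nat.mod_lt _ (by norm_num)))
    (by
      intro y1 h1 y2 h2 heq
      rw [fib, Finset.mem_coe, Finset.mem_filter] at h1 h2
      have e1 := flab_low hx h1.2
      have e2 := flab_low hx h2.2
      have heq' : y1.val % 3 = y2.val % 3 := heq
      refine Fin.ext ?_
      omega)
  rw [Finset.card_range] at h
  exact h

lemma fib_card_mid {P a b : ℕ} {x : Fin P} (hx1 : 3 * a ≤ x.val)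
    (hx2 : x.val < 3 * a + 2 * b) : (fib P a b x).card ≤ 2 := by
  have h := Finset.card_le_card_of_injOn (fun y : Fin P => (y.val - 3 * a) % 2)
    (s := fib P a b x) (t := Finset.range 2)
    (fun y _ => Finset.mem_range.2 (Nat.mod_lt _ (by norm_num)))
    (by
      intro y1 h1 y2 h2 heq
      rw [fib, Finset.mem_coe, Finset.mem_filter] at h1 h2
      have e1 := flab_mid hx1 hx2 h1.2
      have e2 := flab_mid hx1 hx2 h2.2
      have heq' : (y1.val - 3 * a) % 2 = (y2.val - 3 * a) % 2 := heq
      refine Fin.ext ?_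
      omega)
  rw [Finset.card_range] at h
  exact h

lemma fib_card_high {P a b : ℕ} {x : Fin P} (hx : 3 * a + 2 * b ≤ x.val) :
    (fib P a b x).card ≤ 1 := by
  refine Finset.card_le_one.2 (fun y1 h1 y2 h2 => ?_)
  rw [fib, Finset.mem_filter] at h1 h2
  have e1 := flab_high hx h1.2
  have e2 := flab_high hx h2.2
  exact Fin.ext (by omega)

lemma fGr_nbr_sub {P a b : ℕ} {s : Finset (Fin P)} {x : Fin P} :
    nbrIn (fGr P a b) s x ⊆ (fib P a b x).erase x := by
  intro y hy
  rw [mem_nbrIn] at hy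
  obtain ⟨hne, heq⟩ := fGr_adj.1 hy.2
  refine Finset.mem_erase.2 ⟨fun h => hne h.symm, ?_⟩
  rw [fib, Finset.mem_filter]
  exact ⟨Finset.mem_univ y, heq.symm⟩

lemma fGr_deg {P a b : ℕ} (s : Finset (Fin P)) (x : Fin P) :
    (nbrIn (fGr P a b) s x).card ≤ if x.val < 3 * a then 2 else 1 := by
  have hxfib : x ∈ fib P a b x := by
    rw [fib, Finset.mem_filter]; exact ⟨Finset.mem_univ x, rfl⟩
  have hsub := Finset.card_le_card (fGr_nbr_sub (a := a) (b := b) (s := s) (x := x))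
  rw [Finset.card_erase_of_mem hxfib] at hsub
  split_ifs with h
  · have := fib_card_low (a := a) (b := b) (x := x) h
    omega
  · rcases le_or_gt (3 * a + 2 * b) x.val with h2 | h2
    · have := fib_card_high (a := a) (b := b) (x := x) h2
      omega
    · have := fib_card_mid (a := a) (b := b) (x := x) (by omega) h2
      omega

lemma card_filter_val_lt {P m : ℕ} (s : Finset (Fin P)) :
    (s.filter (fun x : Fin P => x.val < m)).card ≤ m := by
  have h := Finset.card_le_card_of_injOn (fun y : Fin P => y.val)
    (s := s.filter (fun x : Fin P => x.val < m)) (t := Finset.range m)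
    (fun y hy => Finset.mem_range.2 (Finset.mem_filter.1 hy).2)
    (fun y1 _ y2 _ heq => Fin.ext heq)
  rw [Finset.card_range] at h
  exact h

lemma fGr_ec2 {P a b : ℕ} (s : Finset (Fin P)) : ec2 (fGr P a b) s ≤ s.card + 3 * a := by
  unfold ec2
  calc ∑ v ∈ s, (nbrIn (fGr P a b) s v).card
      ≤ ∑ v ∈ s, (if v.val < 3 * a then 2 else 1) :=
        Finset.sum_le_sum (fun v _ => fGr_deg s v)
    _ = ∑ v ∈ s, ((if v.val < 3 * a then 1 else 0) + 1) := by
        refine Finset.sum_congr rfl (fun v _ => ?_)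
        split_ifs <;> ring
    _ = (s.filter (fun v : Fin P => v.val < 3 * a)).card + s.card := by
        rw [Finset.sum_add_distrib, Finset.card_filter, Finset.sum_const, smul_eq_mul, mul_one]
    _ ≤ s.card + 3 * a := by
        have := card_filter_val_lt (P := P) (m := 3 * a) s
        omega

lemma fGr_deg0 {P b : ℕ} (s : Finset (Fin P)) (x : Fin P) (hx : 2 * b ≤ x.val) :
    (nbrIn (fGr P 0 b) s x).card = 0 := by
  have hxfib : x ∈ fib P 0 b x := by
    rw [fib, Finset.mem_filter]; exact ⟨Finset.mem_univ x, rfl⟩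
  have hsub := Finset.card_le_card (fGr_nbr_sub (a := 0) (b := b) (s := s) (x := x))
  rw [Finset.card_erase_of_mem hxfib] at hsub
  have := fib_card_high (a := 0) (b := b) (x := x) (by omega)
  omega

lemma fGr_ec2' {P b : ℕ} (s : Finset (Fin P)) : ec2 (fGr P 0 b) s ≤ 2 * b := by
  unfold ec2
  calc ∑ v ∈ s, (nbrIn (fGr P 0 b) s v).card
      ≤ ∑ v ∈ s, (if v.val < 2 * b then 1 else 0) := by
        refine Finset.sum_le_sum (fun v _ => ?_)
        split_ifs with h
        · have h3 := fGr_deg (a := 0) (b := b) s v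
          rw [if_neg (by omega : ¬ v.val < 3 * 0)] at h3
          omega
        · rw [fGr_deg0 s v (by omega)]
    _ = (s.filter (fun v : Fin P => v.val < 2 * b)).card := by rw [Finset.card_filter]
    _ ≤ 2 * b := card_filter_val_lt s

lemma ec2_pos_of_adj {V : Type*} [Fintype V] [DecidableEq V] {H : SimpleGraph V}
    {t : Finset V} {x y : V}
    (hx : x ∈ t) (hy : y ∈ t) (hadj : H.Adj x y) : 1 ≤ ec2 H t := by
  have h1 : y ∈ nbrIn H t x := mem_nbrIn.2 ⟨hy, hadj⟩
  have h2 := Finset.card_pos.2 ⟨y, h1⟩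
  unfold ec2
  calc 1 ≤ (nbrIn H t x).card := h2
    _ ≤ ∑ v ∈ t, (nbrIn H t v).card :=
        Finset.single_le_sum (f := fun v => (nbrIn H t v).card)
          (fun _ _ => Nat.zero_le _) hx

lemma fGr_ks {P a b k : ℕ} (hL : a + b + (P - 3 * a - 2 * b) + 1 ≤ k)
    (t : Finset (Fin P)) (htc : t.card = k) : 1 ≤ ec2 (fGr P a b) t := by
  have hmap : ∀ x ∈ t, flab a b x.val ∈ Finset.range (a + b + (P - 3 * a - 2 * b)) :=
    fun x _ => Finset.mem_range.2 (flab_lt x.isLt)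
  obtain ⟨x, hx, y, hy, hne, heq⟩ := Finset.exists_ne_map_eq_of_card_lt_of_maps_to
    (by rw [htc, Finset.card_range]; omega) hmap
  exact ec2_pos_of_adj hx hy (fGr_adj.2 ⟨hne, heq⟩)

end Constr

section Ramsey

lemma half_binom (n r : ℕ) (hn : 4 ≤ n) (hr : r + 2 ≤ n) : r + 2 ≤ n * (n - 1) / 2 := by
  have h2 : n * 2 ≤ n * (n - 1) := Nat.mul_le_mul_left n (by omega)
  have h3 : n ≤ n * (n - 1) / 2 := (Nat.le_div_iff_mul_le (by norm_num)).2 h2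
  omega

lemma even_binom (n : ℕ) : ∃ c, n * (n - 1) = 2 * c := by
  rcases Nat.even_or_odd n with h | h
  · obtain ⟨m, hm⟩ := h
    exact ⟨m * (n - 1), by rw [hm]; ring⟩
  · obtain ⟨m, hm⟩ := h
    have h1 : n - 1 = 2 * m := by omega
    exact ⟨n * m, by rw [h1]; ring⟩

lemma left_disjunct {p n r : ℕ} (G : SimpleGraph (Fin p)) {t : Finset (Fin p)}
    (htc : t.card = n) (hn : 4 ≤ n) (hr : r + 2 ≤ n) (hec : 2 * r + 2 ≤ ec2 Gᶜ t) :
    edgeCount (G.induce (↑t : Set (Fin p))) ≤ n * (n - 1) / 2 - r - 1 := by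
  have hb := two_mul_edgeCount G t
  have hcpl := ec2_compl G t
  rw [htc] at hcpl
  obtain ⟨c, hc⟩ := even_binom n
  have hdiv : n * (n - 1) / 2 = c := by omega
  omega

lemma right_disjunct {p k : ℕ} (G : SimpleGraph (Fin p))
    (hα : k ≤ alphaIn Gᶜ (Finset.univ : Finset (Fin p))) :
    ∃ t : Finset (Fin p), t.card = k ∧ edgeCount ((Gᶜ).induce (↑t : Set (Fin p))) ≤ 0 := by
  obtain ⟨T, _, hind, hcard⟩ := alphaIn_spec (H := Gᶜ) Finset.univ
  obtain ⟨t, htT, htc⟩ := Finset.exists_subset_card_eq (show k ≤ T.card by omega)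
  refine ⟨t, htc, ?_⟩
  have hz : ec2 Gᶜ t = 0 := indep_ec2_zero (fun u hu v hv => hind u (htT hu) v (htT hv))
  have := two_mul_edgeCount Gᶜ t
  omega

lemma upper_core {p n r k : ℕ} (hn : 4 ≤ n) (hr : r + 2 ≤ n) (hpn : n ≤ p)
    (hbranch : ∀ H : SimpleGraph (Fin p),
      (∀ s : Finset (Fin p), s.card = n → ec2 H s ≤ 2 * r) →
      k ≤ alphaIn H (Finset.univ : Finset (Fin p))) :
    RamseyProp n (n * (n - 1) / 2 - r) k 1 p := by
  intro G
  by_cases hc : ∃ t : Finset (Fin p), t.card = n ∧ 2 * r + 2 ≤ ec2 Gᶜ t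
  · obtain ⟨t, htc, hte⟩ := hc
    exact Or.inl ⟨t, htc, left_disjunct G htc hn hr hte⟩
  · push_neg at hc
    have hi : ∀ s : Finset (Fin p), s.card = n → ec2 Gᶜ s ≤ 2 * r := by
      intro s hs
      have h1 := hc s hs
      obtain ⟨m, hm⟩ := ec2_even Gᶜ s
      omega
    exact Or.inr (right_disjunct G (hbranch Gᶜ hi))

lemma alpha_case1 {p n r k : ℕ} (hrk : k + r ≤ p) (h2r : 2 * r + 2 ≤ n) (hpn : n ≤ p)
    (H : SimpleGraph (Fin p)) (hi : ∀ s : Finset (Fin p), s.card = n → ec2 H s ≤ 2 * r) :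
    k ≤ alphaIn H (Finset.univ : Finset (Fin p)) := by
  rcases le_or_gt (ec2 H Finset.univ) (2 * r) with hec | hec
  · have := lemSimple H (Finset.univ : Finset (Fin p))
    rw [Finset.card_univ, Fintype.card_fin] at this
    omega
  · exfalso
    obtain ⟨m, hm⟩ := ec2_even H (Finset.univ : Finset (Fin p))
    obtain ⟨S, hSc, hSe⟩ := dense_subset H (r + 1) (by omega)
    obtain ⟨t, hSt, _, htc⟩ := Finset.exists_subsuperset_card_eq (n := n)
      (Finset.subset_univ S) (by omega) (by rw [Finset.card_univ, Fintype.card_fin]; exact hpn)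
    have := ec2_mono (H := H) hSt
    have := hi t htc
    omega

lemma alpha_case2 {p n r k : ℕ} (hq : 2 * k - 2 + (2 * r + 4 - n) / 3 ≤ p) (hk : 2 ≤ k)
    (hpn : n ≤ p) (hrn : r + 2 ≤ n)
    (H : SimpleGraph (Fin p)) (hi : ∀ s : Finset (Fin p), s.card = n → ec2 H s ≤ 2 * r) :
    k ≤ alphaIn H (Finset.univ : Finset (Fin p)) := by
  have hE := lemE H n r (by rw [Fintype.card_fin]; exact hpn) hrn hi
  rw [Fintype.card_fin] at hE
  omega

lemma not_ramsey {p n r k : ℕ} (hcr : r + 1 ≤ n * (n - 1) / 2) (H : SimpleGraph (Fin p))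
    (hns : ∀ s : Finset (Fin p), s.card = n → ec2 H s ≤ 2 * r)
    (hks : ∀ t : Finset (Fin p), t.card = k → 1 ≤ ec2 H t) :
    ¬ RamseyProp n (n * (n - 1) / 2 - r) k 1 p := by
  intro hram
  rcases hram Hᶜ with ⟨t, htc, hte⟩ | ⟨t, htc, hte⟩
  · have hb := two_mul_edgeCount Hᶜ t
    have hcpl := ec2_compl Hᶜ t
    have hcc : Hᶜᶜ = H := compl_compl H
    rw [hcc] at hcpl
    rw [htc] at hcpl
    have h1 := hns t htc
    obtain ⟨c, hc⟩ := even_binom n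
    have hdiv : n * (n - 1) / 2 = c := by omega
    omega
  · have hcc : Hᶜᶜ = H := compl_compl H
    rw [hcc] at hte
    have hb := two_mul_edgeCount H t
    have h1 := hks t htc
    omega

lemma top_ks {p k : ℕ} (hk : 2 ≤ k) (t : Finset (Fin p)) (htc : t.card = k) :
    1 ≤ ec2 (⊤ : SimpleGraph (Fin p)) t := by
  obtain ⟨x, hx, y, hy, hxy⟩ := Finset.one_lt_card.1 (show 1 < t.card by omega)
  have : y ∈ nbrIn (⊤ : SimpleGraph (Fin p)) t x :=
    mem_nbrIn.2 ⟨hy, by rw [SimpleGraph.top_adj]; exact hxy⟩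
  have h1 := Finset.card_pos.2 ⟨y, this⟩
  unfold ec2
  calc 1 ≤ (nbrIn (⊤ : SimpleGraph (Fin p)) t x).card := h1
    _ ≤ ∑ v ∈ t, (nbrIn (⊤ : SimpleGraph (Fin p)) t v).card :=
        Finset.single_le_sum (f := fun v => (nbrIn (⊤ : SimpleGraph (Fin p)) t v).card)
          (fun _ _ => Nat.zero_le _) hx

lemma not_ramsey_small {p n r k : ℕ} (hk : 2 ≤ k) (hp : p < n)
    (hcr : r + 1 ≤ n * (n - 1) / 2) :
    ¬ RamseyProp n (n * (n - 1) / 2 - r) k 1 p := by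
  refine not_ramsey hcr (⊤ : SimpleGraph (Fin p)) ?_ (top_ks hk)
  intro s hs
  have h1 := Finset.card_le_univ s
  rw [Fintype.card_fin] at h1
  omega

lemma genRamsey_eq {n r' k M : ℕ} (hM : 0 < M) (hup : RamseyProp n r' k 1 M)
    (hlow : ∀ P, P < M → ¬ RamseyProp n r' k 1 P) : genRamsey n r' k 1 = M := by
  unfold genRamsey
  apply le_antisymm
  · exact Nat.sInf_le ⟨hM, hup⟩
  · refine le_csInf ⟨M, hM, hup⟩ ?_
    rintro P ⟨hP0, hPr⟩
    by_contra hc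
    push_neg at hc
    exact hlow P hc hPr

lemma lower_all_case1 {k n r : ℕ} (hk : 2 ≤ k) (hn4 : 4 ≤ n) (hrn : r + 2 ≤ n)
    (h2r : 2 * r + 2 ≤ n) :
    ∀ P, P < max n (k + r) → ¬ RamseyProp n (n * (n - 1) / 2 - r) k 1 P := by
  intro P hP
  have hcr : r + 1 ≤ n * (n - 1) / 2 := by
    have := half_binom n r hn4 hrn; omega
  rcases lt_or_ge P n with hPn | hPn
  · exact not_ramsey_small hk hPn hcr
  · have hPkr : P < k + r := by
      rcases lt_max_iff.1 hP with h | h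
      · omega
      · exact h
    refine not_ramsey hcr (fGr P 0 (P + 1 - k)) ?_ (fGr_ks (by omega))
    intro s _
    have h1 := fGr_ec2' (b := P + 1 - k) s
    have hb : P + 1 - k ≤ r := by omega
    omega

lemma lower_all_case2 {k n r : ℕ} (hk : 2 ≤ k) (hn4 : 4 ≤ n) (hrn : r + 2 ≤ n)
    (h2r : n ≤ 2 * r + 1) :
    ∀ P, P < max n (2 * k - 2 + (2 * r + 4 - n) / 3) →
      ¬ RamseyProp n (n * (n - 1) / 2 - r) k 1 P := by
  intro P hP
  have hcr : r + 1 ≤ n * (n - 1) / 2 := by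
    have := half_binom n r hn4 hrn; omega
  have hq1 := Nat.div_add_mod (2 * r + 4 - n) 3
  have hq2 : (2 * r + 4 - n) % 3 < 3 := Nat.mod_lt _ (by norm_num)
  rcases lt_or_ge P n with hPn | hPn
  · exact not_ramsey_small hk hPn hcr
  · have hPq : P < 2 * k - 2 + (2 * r + 4 - n) / 3 := by
      rcases lt_max_iff.1 hP with h | h
      · omega
      · exact h
    rcases le_or_gt P (2 * k - 2) with hsub | hsub
    · refine not_ramsey hcr (fGr P 0 (P + 1 - k)) ?_ (fGr_ks (by omega))
      intro s hs
      have h1 := fGr_ec2 (a := 0) (b := P + 1 - k) s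
      obtain ⟨m, hm⟩ := ec2_even (fGr P 0 (P + 1 - k)) s
      rw [hs] at h1
      omega
    · have hP3 : P ≤ 3 * k - 5 := by omega
      refine not_ramsey hcr (fGr P (P - (2 * k - 2)) (3 * k - 3 - P)) ?_ (fGr_ks (by omega))
      intro s hs
      have h1 := fGr_ec2 (a := P - (2 * k - 2)) (b := 3 * k - 3 - P) s
      obtain ⟨m, hm⟩ := ec2_even (fGr P (P - (2 * k - 2)) (3 * k - 3 - P)) s
      rw [hs] at h1
      omega

end Ramsey

theorem stmt_16 (k n r : ℕ) (hk : 2 ≤ k) (hn : 4 ≤ n) (hr0 : 0 < r) (hr : r ≤ n - 2) :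
    ((r : ℚ) ≤ (n : ℚ) / 2 - 1 →
      genRamsey n (n * (n - 1) / 2 - r) k 1 = max n (k + r)) ∧
    ((n : ℚ) / 2 - 1 < (r : ℚ) →
      genRamsey n (n * (n - 1) / 2 - r) k 1 = max n (2 * k - 2 + (2 * r + 4 - n) / 3)) := by
  have hrn : r + 2 ≤ n := by omega
  constructor
  · intro hcase
    have h2r : 2 * r + 2 ≤ n := by
      have h : ((2 * r + 2 : ℕ) : ℚ) ≤ (n : ℚ) := by push_cast; linarith
      exact_mod_cast h
    refine genRamsey_eq ?_ ?_ (fun P hP => lower_all_case1 hk hn hrn h2r P hP)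
    · have := le_max_left n (k + r); omega
    · exact upper_core hn hrn (le_max_left n (k + r))
        (fun H hi => alpha_case1 (le_max_right n (k + r)) h2r (le_max_left n (k + r)) H hi)
  · intro hcase
    have h2r : n ≤ 2 * r + 1 := by
      have h : (n : ℚ) < ((2 * r + 2 : ℕ) : ℚ) := by push_cast; linarith
      have h2 : n < 2 * r + 2 := by exact_mod_cast h
      omega
    refine genRamsey_eq ?_ ?_ (fun P hP => lower_all_case2 hk hn hrn h2r P hP)
    · have := le_max_left n (2 * k - 2 + (2 * r + 4 - n) / 3); omega
    · exact upper_core hn hrn (le_max_left n _)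
        (fun H hi => alpha_case2 (le_max_right n _) hk (le_max_left n _) hrn H hi)
end

section
/- Let k and n be positive integers with k ≥ 2 and n ≥ 4. Then R(n, n(n−1)/2 − n + 2; k, 1) = n if n ≥ 3k − 4, and R(n, n(n−1)/2 − n + 2; k, 1) = 2k − 2 + ⌊n/3⌋ if n < 3k − 4. -/
open SimpleGraph

open Finset

section Hidden17

namespace Work

set_option linter.unusedSectionVars false

variable {V : Type*} [Fintype V] [DecidableEq V]

def dg (G : SimpleGraph V) [DecidableRel G.Adj] (t : Finset V) (a : V) : ℕ :=
  (t.filter fun b => G.Adj a b).card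

def e2 (G : SimpleGraph V) [DecidableRel G.Adj] (t : Finset V) : ℕ := ∑ a ∈ t, dg G t a

variable (G : SimpleGraph V) [DecidableRel G.Adj]

lemma dg_mono {s t : Finset V} (h : s ⊆ t) (a : V) :
    dg G s a ≤ dg G t a :=
  Finset.card_le_card (Finset.filter_subset_filter _ h)

lemma dg_le_card (t : Finset V) (a : V) : dg G t a ≤ t.card :=
  Finset.card_le_card (Finset.filter_subset _ _)

lemma e2_mono {s t : Finset V} (h : s ⊆ t) : e2 G s ≤ e2 G t := by
  unfold e2
  calc ∑ a ∈ s, dg G s a ≤ ∑ a ∈ s, dg G t a := Finset.sum_le_sum fun a _ => dg_mono G h a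
  _ ≤ ∑ a ∈ t, dg G t a := Finset.sum_le_sum_of_subset h

lemma prod_count (t : Finset V) :
    ((t ×ˢ t).filter fun p => G.Adj p.1 p.2).card = e2 G t := by
  rw [Finset.card_eq_sum_card_fiberwise (f := Prod.fst) (t := t)
    (fun x hx => (Finset.mem_product.1 (Finset.mem_filter.1 hx).1).1)]
  unfold e2 dg
  refine Finset.sum_congr rfl fun a ha => ?_
  refine Finset.card_bij (fun z _ => z.2) ?_ ?_ ?_
  · rintro ⟨x, y⟩ hz
    simp only [Finset.mem_filter, Finset.mem_product] at hz ⊢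
    obtain ⟨⟨⟨hx, hy⟩, hadj⟩, hfst⟩ := hz
    subst hfst
    exact ⟨hy, hadj⟩
  · rintro ⟨x, y⟩ hz ⟨x', y'⟩ hz' hyy
    simp only [Finset.mem_filter, Finset.mem_product] at hz hz'
    simp only at hyy
    have : x = a := hz.2
    have : x' = a := hz'.2
    simp_all
  · intro b hb
    simp only [Finset.mem_filter] at hb
    exact ⟨(a, b), by simp [ha, hb.1, hb.2], rfl⟩

lemma link (t : Finset V) :
    2 * edgeCount (G.induce (↑t : Set V)) = e2 G t := by
  letI : DecidableRel (G.induce (↑t : Set V)).Adj := fun x y =>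
    inferInstanceAs (Decidable (G.Adj x.val y.val))
  have h1 : edgeCount (G.induce (↑t : Set V)) = (G.induce (↑t : Set V)).edgeFinset.card := by
    rw [edgeCount, Nat.card_eq_fintype_card]
    convert (SimpleGraph.edgeFinset_card).symm
  rw [h1, SimpleGraph.two_mul_card_edgeFinset, ← prod_count G t]
  refine Finset.card_bij (fun z _ => ((z.1 : V), (z.2 : V))) ?_ ?_ ?_
  · rintro ⟨x, y⟩ hz
    simp only [Finset.mem_filter, Finset.mem_univ, true_and] at hz
    simp only [Finset.mem_filter, Finset.mem_product, Finset.mem_coe]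
    refine ⟨⟨?_, ?_⟩, ?_⟩
    · exact Finset.mem_coe.1 x.2
    · exact Finset.mem_coe.1 y.2
    · simpa [SimpleGraph.comap_adj] using hz
  · rintro ⟨x, y⟩ _ ⟨x', y'⟩ _ h
    simp only [Prod.mk.injEq] at h
    have h1 : x = x' := Subtype.ext h.1
    have h2 : y = y' := Subtype.ext h.2
    simp [h1, h2]
  · rintro ⟨a, b⟩ hab
    simp only [Finset.mem_filter, Finset.mem_product] at hab
    refine ⟨(⟨a, Finset.mem_coe.2 hab.1.1⟩, ⟨b, Finset.mem_coe.2 hab.1.2⟩), ?_, rfl⟩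
    simp only [Finset.mem_filter, Finset.mem_univ, true_and]
    simpa [SimpleGraph.comap_adj] using hab.2

lemma dg_compl (t : Finset V) {a : V} (ha : a ∈ t) :
    dg Gᶜ t a + dg G t a = t.card - 1 := by
  unfold dg
  have h1 : (t.filter fun b => Gᶜ.Adj a b) = (t.erase a).filter (fun b => ¬ G.Adj a b) := by
    ext b
    simp only [Finset.mem_filter, Finset.mem_erase, SimpleGraph.compl_adj]
    exact ⟨fun ⟨hb, hne, hn⟩ => ⟨⟨Ne.symm hne, hb⟩, hn⟩,
           fun ⟨⟨hne, hb⟩, hn⟩ => ⟨hb, Ne.symm hne, hn⟩⟩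
  have h2 : (t.filter fun b => G.Adj a b) = (t.erase a).filter (fun b => G.Adj a b) := by
    ext b
    simp only [Finset.mem_filter, Finset.mem_erase]
    exact ⟨fun ⟨hb, had⟩ => ⟨⟨Ne.symm (G.ne_of_adj had), hb⟩, had⟩, fun ⟨⟨_, hb⟩, had⟩ => ⟨hb, had⟩⟩
  rw [h1, h2, add_comm, Finset.card_filter_add_card_filter_not (p := fun b => G.Adj a b),
    Finset.card_erase_of_mem ha]

lemma e2_compl (t : Finset V) :
    e2 Gᶜ t + e2 G t = t.card * (t.card - 1) := by
  unfold e2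
  rw [← Finset.sum_add_distrib]
  rw [Finset.sum_congr rfl (fun a ha => dg_compl G t ha)]
  simp [mul_comm]

lemma edgeCount_zero_of_indep {t : Finset V}
    (h : ∀ u ∈ t, ∀ v ∈ t, ¬ G.Adj u v) :
    edgeCount (G.induce (↑t : Set V)) = 0 := by
  have hl := link G t
  have he : e2 G t = 0 := by
    apply Finset.sum_eq_zero
    intro a ha
    rw [dg, Finset.card_eq_zero, Finset.filter_eq_empty_iff]
    exact fun {b} hb => h a ha b hb
  omega

lemma edgeCount_pos_of_adj {t : Finset V} {u v : V}
    (hu : u ∈ t) (hv : v ∈ t) (h : G.Adj u v) :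
    1 ≤ edgeCount (G.induce (↑t : Set V)) := by
  have hl := link G t
  have he : 1 ≤ e2 G t := by
    calc 1 ≤ dg G t u := Finset.card_pos.2 ⟨v, Finset.mem_filter.2 ⟨hv, h⟩⟩
    _ ≤ e2 G t := Finset.single_le_sum (f := fun a => dg G t a) (fun _ _ => Nat.zero_le _) hu
  omega

lemma dg_insert_self {t : Finset V} {v : V} :
    dg G (insert v t) v = dg G t v := by
  unfold dg
  rw [Finset.filter_insert]
  simp [G.irrefl]

lemma dg_insert_other {t : Finset V} {v : V} (hv : v ∉ t) (a : V) :
    dg G (insert v t) a = dg G t a + (if G.Adj a v then 1 else 0) := by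
  unfold dg
  rw [Finset.filter_insert]
  by_cases h : G.Adj a v
  · rw [if_pos h, Finset.card_insert_of_notMem (fun hc => hv (Finset.mem_filter.1 hc).1), if_pos h]
  · rw [if_neg h, if_neg h, add_zero]

lemma e2_insert {t : Finset V} {v : V} (hv : v ∉ t) :
    e2 G (insert v t) = e2 G t + 2 * dg G t v := by
  unfold e2
  rw [Finset.sum_insert hv, dg_insert_self G]
  have h2 : ∀ a ∈ t, dg G (insert v t) a = dg G t a + (if G.Adj a v then 1 else 0) :=
    fun a _ => dg_insert_other G hv a
  rw [Finset.sum_congr rfl h2, Finset.sum_add_distrib, ← Finset.card_filter]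
  have h3 : (t.filter fun a => G.Adj a v) = t.filter fun b => G.Adj v b := by
    apply Finset.filter_congr
    intro x _
    simp [G.adj_comm]
  rw [h3]
  unfold dg
  ring

/-- Lemma F: greedy independent set: `6α + e2 ≥ 4|t|`. -/
lemma lemF (t : Finset V) :
    ∃ T ⊆ t, (∀ u ∈ T, ∀ v ∈ T, ¬ G.Adj u v) ∧ 4 * t.card ≤ 6 * T.card + e2 G t := by
  induction t using Finset.strongInduction with
  | _ t ih =>
    rcases eq_or_ne t ∅ with rfl | hne
    · exact ⟨∅, Finset.Subset.refl _, by simp, by simp⟩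
    obtain ⟨v, hv, hmin⟩ := Finset.exists_min_image t (dg G t) (Finset.nonempty_of_ne_empty hne)
    set d := dg G t v with hd
    set R : Finset V := insert v (t.filter fun b => G.Adj v b) with hR
    have hvR : v ∈ R := Finset.mem_insert_self _ _
    have hRt : R ⊆ t := Finset.insert_subset hv (Finset.filter_subset _ _)
    have hRcard : R.card = d + 1 := by
      rw [hR, Finset.card_insert_of_notMem (fun hc => G.irrefl (Finset.mem_filter.1 hc).2)]
      rfl
    set S : Finset V := t \ R with hS
    have hSsub : S ⊂ t := Finset.sdiff_ssubset hRt ⟨v, hvR⟩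
    obtain ⟨T', hT'sub, hT'ind, hT'car⟩ := ih S hSsub
    have hScard : S.card = t.card - (d + 1) := by rw [hS, Finset.card_sdiff_of_subset hRt, hRcard]
    have hcard_t : d + 1 ≤ t.card := hRcard ▸ Finset.card_le_card hRt
    -- edge count decomposition
    have hsplit : e2 G t = ∑ a ∈ S, dg G t a + ∑ a ∈ R, dg G t a := by
      rw [e2, ← Finset.sum_sdiff hRt]
    have h1 : ∑ a ∈ S, dg G t a ≥ e2 G S :=
      Finset.sum_le_sum fun a _ => dg_mono G (Finset.sdiff_subset) a
    have h2 : ∑ a ∈ R, dg G t a ≥ (d + 1) * d := by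
      calc ∑ a ∈ R, dg G t a ≥ ∑ _a ∈ R, d := Finset.sum_le_sum fun a ha => hmin a (hRt ha)
      _ = (d + 1) * d := by rw [Finset.sum_const, hRcard, smul_eq_mul]
    have hkey : e2 G S + (d + 1) * d ≤ e2 G t := by omega
    refine ⟨insert v T', Finset.insert_subset hv (hT'sub.trans hSsub.subset), ?_, ?_⟩
    · intro x hx y hy hadj
      have hnadj : ∀ w ∈ S, ¬ G.Adj v w := by
        intro w hw hadj
        exact (Finset.mem_sdiff.1 (hS ▸ hw)).2 (Finset.mem_insert_of_mem
          (Finset.mem_filter.2 ⟨(Finset.mem_sdiff.1 (hS ▸ hw)).1, hadj⟩))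
      rcases Finset.mem_insert.1 hx with h1 | hx' <;>
        rcases Finset.mem_insert.1 hy with h2 | hy'
      · exact G.irrefl (by rw [h1, h2] at hadj; exact hadj)
      · exact hnadj y (hT'sub hy') (by rw [h1] at hadj; exact hadj)
      · exact hnadj x (hT'sub hx') (G.adj_symm (by rw [h2] at hadj; exact hadj))
      · exact hT'ind x hx' y hy' hadj
    · have hvT' : v ∉ T' := fun hc =>
        (Finset.mem_sdiff.1 (hT'sub hc)).2 hvR
      rw [Finset.card_insert_of_notMem hvT']
      have hd2 : 3 * d ≤ d * d + 2 := by
        rcases Nat.lt_or_ge d 3 with h | h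
        · interval_cases d <;> norm_num
        · exact le_trans (Nat.mul_le_mul_right d h) (Nat.le_add_right _ 2)
      have hdd : (d + 1) * d = d * d + d := by ring
      rw [hdd] at hkey
      have hts : t.card = S.card + d + 1 := by omega
      linarith [hT'car, hkey, hd2]

/-- Lemma G: in a graph of min degree ≥ 2, one can find `m` vertices spanning
at least `m-1` (doubled: `2(m-1)`) edges. -/
lemma lemG (t : Finset V) (hmin : ∀ v ∈ t, 2 ≤ dg G t v) (m : ℕ) (hm1 : 1 ≤ m)
    (hm : m ≤ t.card) :
    ∃ A ⊆ t, A.card = m ∧ 2 * (m - 1) ≤ e2 G A := by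
  induction m, hm1 using Nat.le_induction with
  | base =>
    obtain ⟨v, hv⟩ := Finset.card_pos.1 (lt_of_lt_of_le Nat.one_pos hm)
    exact ⟨{v}, Finset.singleton_subset_iff.2 hv, Finset.card_singleton v, by simp⟩
  | succ m hm1' ih =>
    obtain ⟨A, hAsub, hAcard, hAe⟩ := ih (le_trans (Nat.le_succ m) hm)
    have hAne : (t \ A).Nonempty := by
      rw [Finset.sdiff_nonempty]
      intro hc
      have := Finset.card_le_card hc
      omega
    by_cases hex : ∃ v ∈ t \ A, 0 < dg G A v
    · obtain ⟨v, hvmem, hvdeg⟩ := hex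
      have hvt : v ∈ t := (Finset.mem_sdiff.1 hvmem).1
      have hvA : v ∉ A := (Finset.mem_sdiff.1 hvmem).2
      refine ⟨insert v A, Finset.insert_subset hvt hAsub, ?_, ?_⟩
      · rw [Finset.card_insert_of_notMem hvA, hAcard]
      · rw [e2_insert G hvA]
        omega
    · push_neg at hex
      have hfull : ∀ a ∈ A, dg G t a ≤ dg G A a := by
        intro a ha
        apply Finset.card_le_card
        intro b hb
        obtain ⟨hbt, hab⟩ := Finset.mem_filter.1 hb
        have hbA : b ∈ A := by
          by_contra hbA
          have h0 := hex b (Finset.mem_sdiff.2 ⟨hbt, hbA⟩)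
          have : a ∈ A.filter (fun c => G.Adj b c) :=
            Finset.mem_filter.2 ⟨ha, G.adj_symm hab⟩
          rw [dg] at h0
          have := Finset.card_pos.2 ⟨a, this⟩
          omega
        exact Finset.mem_filter.2 ⟨hbA, hab⟩
      have he2A : 2 * m ≤ e2 G A := by
        rw [e2, ← hAcard]
        calc 2 * A.card = ∑ _a ∈ A, 2 := by rw [Finset.sum_const, smul_eq_mul, mul_comm]
        _ ≤ ∑ a ∈ A, dg G A a :=
          Finset.sum_le_sum fun a ha => le_trans (hmin a (hAsub ha)) (hfull a ha)
      obtain ⟨v, hvmem⟩ := hAne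
      have hvt : v ∈ t := (Finset.mem_sdiff.1 hvmem).1
      have hvA : v ∉ A := (Finset.mem_sdiff.1 hvmem).2
      refine ⟨insert v A, Finset.insert_subset hvt hAsub, ?_, ?_⟩
      · rw [Finset.card_insert_of_notMem hvA, hAcard]
      · have := e2_mono G (Finset.subset_insert v A)
        omega

/-- Main induction for the second case. -/
lemma mainM (n : ℕ) (hn4 : 4 ≤ n) (S : Finset V) :
    ∀ k b : ℕ,
      (∀ j A, j ≤ b → A ⊆ S → A.card + 2 * j ≤ n → e2 G A + 2 * j ≤ 2 * n - 4) →
      2 * k + n / 3 ≤ S.card + 2 →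
      2 * (n / 3) + n % 3 + k ≤ S.card + 2 + b →
      ∃ T ⊆ S, T.card = k ∧ ∀ u ∈ T, ∀ v ∈ T, ¬ G.Adj u v := by
  induction S using Finset.strongInduction with
  | _ S ih =>
  intro k b hW h1 h2
  rcases Nat.eq_zero_or_pos k with rfl | hk
  · exact ⟨∅, Finset.empty_subset _, Finset.card_empty, by simp⟩
  by_cases hv : ∃ v ∈ S, dg G S v ≤ 1
  · obtain ⟨v, hvS, hvd⟩ := hv
    rcases Nat.eq_zero_or_pos (dg G S v) with h0 | hpos
    · -- isolated vertex
      have hnadj : ∀ u ∈ S, ¬ G.Adj v u := by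
        intro u hu hadj
        rw [dg, Finset.card_eq_zero] at h0
        exact Finset.notMem_empty u (h0 ▸ Finset.mem_filter.2 ⟨hu, hadj⟩)
      set S' := S.erase v with hS'
      have hsub : S' ⊂ S := Finset.erase_ssubset hvS
      have hcard : S'.card = S.card - 1 := Finset.card_erase_of_mem hvS
      have hScard : 1 ≤ S.card := Finset.card_pos.2 ⟨v, hvS⟩
      obtain ⟨T', hT'sub, hT'card, hT'ind⟩ := ih S' hsub (k - 1) b
        (fun j A hj hA hc => hW j A hj (hA.trans (Finset.erase_subset v S)) hc)
        (by omega) (by omega)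
      have hvT' : v ∉ T' := fun hc => (Finset.mem_erase.1 (hT'sub hc)).1 rfl
      refine ⟨insert v T', Finset.insert_subset hvS
        (hT'sub.trans (Finset.erase_subset v S)), ?_, ?_⟩
      · rw [Finset.card_insert_of_notMem hvT']; omega
      · intro x hx y hy hadj
        rcases Finset.mem_insert.1 hx with hx1 | hx' <;>
          rcases Finset.mem_insert.1 hy with hy1 | hy'
        · exact G.irrefl (by rw [hx1, hy1] at hadj; exact hadj)
        · exact hnadj y (Finset.mem_of_mem_erase (hT'sub hy'))
            (by rw [hx1] at hadj; exact hadj)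
        · exact hnadj x (Finset.mem_of_mem_erase (hT'sub hx'))
            (G.adj_symm (by rw [hy1] at hadj; exact hadj))
        · exact hT'ind x hx' y hy' hadj
    · -- degree one vertex
      have hd1 : dg G S v = 1 := le_antisymm hvd hpos
      obtain ⟨u, hu⟩ := Finset.card_eq_one.1 hd1
      have huS : u ∈ S := by
        have : u ∈ S.filter (fun b => G.Adj v b) := hu ▸ Finset.mem_singleton_self u
        exact (Finset.mem_filter.1 this).1
      have hadjvu : G.Adj v u := by
        have : u ∈ S.filter (fun b => G.Adj v b) := hu ▸ Finset.mem_singleton_self u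
        exact (Finset.mem_filter.1 this).2
      have hneuv : u ≠ v := fun h => G.irrefl (h ▸ hadjvu)
      set S' := S \ {v, u} with hS'
      have hpair : ({v, u} : Finset V) ⊆ S := by
        intro x hx
        rcases Finset.mem_insert.1 hx with rfl | hx
        · exact hvS
        · rwa [Finset.mem_singleton.1 hx]
      have hsub : S' ⊂ S := Finset.sdiff_ssubset hpair ⟨v, Finset.mem_insert_self _ _⟩
      have hcard : S'.card = S.card - 2 := by
        rw [hS', Finset.card_sdiff_of_subset hpair, Finset.card_insert_of_notMem
          (fun h => hneuv (Finset.mem_singleton.1 h).symm |>.elim), Finset.card_singleton]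
      have hScard : 2 ≤ S.card := by
        have := Finset.card_le_card hpair
        rw [Finset.card_insert_of_notMem
          (fun h => hneuv (Finset.mem_singleton.1 h).symm |>.elim), Finset.card_singleton] at this
        omega
      have hW' : ∀ j A, j ≤ b + 1 → A ⊆ S' → A.card + 2 * j ≤ n →
          e2 G A + 2 * j ≤ 2 * n - 4 := by
        intro j A hj hA hc
        rcases Nat.eq_zero_or_pos j with rfl | hjpos
        · exact hW 0 A (Nat.zero_le b) (hA.trans (Finset.sdiff_subset)) hc
        · have hvA : v ∉ A := fun hc' =>
            (Finset.mem_sdiff.1 (hA hc')).2 (Finset.mem_insert_self _ _)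
          have huA : u ∉ A := fun hc' =>
            (Finset.mem_sdiff.1 (hA hc')).2
              (Finset.mem_insert_of_mem (Finset.mem_singleton_self u))
          have hvuA : v ∉ insert u A := by
            intro hc'
            rcases Finset.mem_insert.1 hc' with h | h
            · exact hneuv h.symm
            · exact hvA h
          set A' := insert v (insert u A) with hA'def
          have hA'sub : A' ⊆ S := by
            apply Finset.insert_subset hvS
            exact Finset.insert_subset huS (hA.trans Finset.sdiff_subset)
          have hA'card : A'.card = A.card + 2 := by
            rw [hA'def, Finset.card_insert_of_notMem hvuA, Finset.card_insert_of_notMem huA]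
          have he2step : e2 G A + 2 ≤ e2 G A' := by
            rw [hA'def, e2_insert G hvuA, e2_insert G huA]
            have : 1 ≤ dg G (insert u A) v :=
              Finset.card_pos.2 ⟨u, Finset.mem_filter.2 ⟨Finset.mem_insert_self _ _, hadjvu⟩⟩
            omega
          have := hW (j - 1) A' (by omega) hA'sub (by omega)
          omega
      obtain ⟨T', hT'sub, hT'card, hT'ind⟩ := ih S' hsub (k - 1) (b + 1) hW'
        (by omega) (by omega)
      have hvT' : v ∉ T' := fun hc =>
        (Finset.mem_sdiff.1 (hT'sub hc)).2 (Finset.mem_insert_self _ _)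
      have hnadj : ∀ w ∈ T', ¬ G.Adj v w := by
        intro w hw hadj
        have hwS : w ∈ S := Finset.sdiff_subset (hT'sub hw)
        have : w ∈ S.filter (fun b => G.Adj v b) := Finset.mem_filter.2 ⟨hwS, hadj⟩
        rw [hu, Finset.mem_singleton] at this
        exact (Finset.mem_sdiff.1 (hT'sub hw)).2
          (by rw [this]; exact Finset.mem_insert_of_mem (Finset.mem_singleton_self u))
      refine ⟨insert v T', Finset.insert_subset hvS (hT'sub.trans Finset.sdiff_subset), ?_, ?_⟩
      · rw [Finset.card_insert_of_notMem hvT']; omega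
      · intro x hx y hy hadj
        rcases Finset.mem_insert.1 hx with hx1 | hx' <;>
          rcases Finset.mem_insert.1 hy with hy1 | hy'
        · exact G.irrefl (by rw [hx1, hy1] at hadj; exact hadj)
        · exact hnadj y hy' (by rw [hx1] at hadj; exact hadj)
        · exact hnadj x hx' (G.adj_symm (by rw [hy1] at hadj; exact hadj))
        · exact hT'ind x hx' y hy' hadj
  · -- minimum degree at least 2
    push_neg at hv
    have hmin : ∀ v ∈ S, 2 ≤ dg G S v := fun v hv' => hv v hv'
    by_cases hs : n ≤ S.card
    · exfalso
      obtain ⟨A, hAsub, hAcard, hAe⟩ := lemG G S hmin n (by omega) hs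
      have := hW 0 A (Nat.zero_le b) hAsub (by omega)
      omega
    · push_neg at hs
      obtain ⟨T₀, hT₀sub, hT₀ind, hT₀card⟩ := lemF G S
      set j := min b ((n - S.card) / 2) with hj
      have hj1 : j ≤ b := min_le_left _ _
      have hj2 : S.card + 2 * j ≤ n := by
        have : j ≤ (n - S.card) / 2 := min_le_right _ _
        omega
      have hj3 : j = b ∨ n - S.card < 2 * j + 2 := by
        rcases le_total b ((n - S.card) / 2) with h | h
        · left; rw [hj, min_eq_left h]
        · right; rw [hj, min_eq_right h]; omega
      have hWS := hW j S hj1 (Finset.Subset.refl S) hj2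
      have hkT : k ≤ T₀.card := by omega
      obtain ⟨T, hTsub, hTcard⟩ := Finset.exists_subset_card_eq hkT
      exact ⟨T, hTsub.trans hT₀sub, hTcard,
        fun x hx y hy => hT₀ind x (hTsub hx) y (hTsub hy)⟩

end Work

namespace Cluster
open Work

/-- cluster assignment function -/
def cf (q x : ℕ) : ℕ := if x < 3 * (q - 1) then x / 3 else (q - 1) + (x - 3 * (q - 1)) / 2

/-- the extremal cluster graph: disjoint triangles and edges -/
def clusterGraph (m q : ℕ) : SimpleGraph (Fin m) where
  Adj x y := x ≠ y ∧ cf q x.val = cf q y.val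
  symm := ⟨by rintro x y ⟨h1, h2⟩; exact ⟨h1.symm, h2.symm⟩⟩
  loopless := ⟨fun x h => h.1 rfl⟩

instance (m q : ℕ) : DecidableRel (clusterGraph m q).Adj := fun x y =>
  inferInstanceAs (Decidable (x ≠ y ∧ cf q x.val = cf q y.val))

lemma cf_lt {k q m : ℕ} (hq : 1 ≤ q) (hqk : q + 2 ≤ k) (hm : m + 3 ≤ 2 * k + q)
    (x : Fin m) : cf q x.val < k - 1 := by
  have hx : x.val < m := x.2
  unfold cf
  split
  · next h => omega
  · next h => omega

/-- fibers of size-3 clusters -/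
lemma fiber_low {q m : ℕ} (t : Finset (Fin m)) {i : ℕ} (hi : i < q - 1) :
    (t.filter fun x => cf q x.val = i).card ≤ 3 := by
  have := Finset.card_le_card_of_injOn (fun x : Fin m => x.val - 3 * i)
    (s := t.filter fun x => cf q x.val = i) (t := Finset.range 3) ?_ ?_
  · simpa using this
  · intro a ha
    obtain ⟨-, hcf⟩ := Finset.mem_filter.1 ha
    unfold cf at hcf
    simp only [Finset.mem_coe, Finset.mem_range]
    split at hcf <;> omega
  · intro a ha b hb hab
    obtain ⟨-, hcfa⟩ := Finset.mem_filter.1 ha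
    obtain ⟨-, hcfb⟩ := Finset.mem_filter.1 hb
    unfold cf at hcfa hcfb
    have hab' : a.val - 3 * i = b.val - 3 * i := hab
    apply Fin.ext
    split at hcfa <;> split at hcfb <;> omega

/-- fibers of size-2 clusters -/
lemma fiber_high {q m : ℕ} (t : Finset (Fin m)) {i : ℕ} (hi : q - 1 ≤ i) :
    (t.filter fun x => cf q x.val = i).card ≤ 2 := by
  have := Finset.card_le_card_of_injOn
    (fun x : Fin m => x.val - (3 * (q - 1) + 2 * (i - (q - 1))))
    (s := t.filter fun x => cf q x.val = i) (t := Finset.range 2) ?_ ?_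
  · simpa using this
  · intro a ha
    obtain ⟨-, hcf⟩ := Finset.mem_filter.1 ha
    unfold cf at hcf
    simp only [Finset.mem_coe, Finset.mem_range]
    split at hcf <;> omega
  · intro a ha b hb hab
    obtain ⟨-, hcfa⟩ := Finset.mem_filter.1 ha
    obtain ⟨-, hcfb⟩ := Finset.mem_filter.1 hb
    unfold cf at hcfa hcfb
    have hab' : a.val - (3 * (q - 1) + 2 * (i - (q - 1))) =
        b.val - (3 * (q - 1) + 2 * (i - (q - 1))) := hab
    apply Fin.ext
    split at hcfa <;> split at hcfb <;> omega

lemma dg_cluster {q m : ℕ} (t : Finset (Fin m)) {x : Fin m} (hx : x ∈ t) :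
    dg (clusterGraph m q) t x
      = (t.filter fun y => cf q y.val = cf q x.val).card - 1 := by
  rw [dg]
  have h : (t.filter fun y => (clusterGraph m q).Adj x y)
      = (t.filter fun y => cf q y.val = cf q x.val).erase x := by
    ext y
    simp only [Finset.mem_filter, Finset.mem_erase]
    change y ∈ t ∧ (x ≠ y ∧ cf q x.val = cf q y.val) ↔ _
    constructor
    · rintro ⟨hy, hne, hcf⟩; exact ⟨fun h => hne h.symm, hy, hcf.symm⟩
    · rintro ⟨hne, hy, hcf⟩; exact ⟨hy, fun h => hne h.symm, hcf.symm⟩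
  rw [h]
  exact Finset.card_erase_of_mem (Finset.mem_filter.2 ⟨hx, rfl⟩)

lemma e2_cluster_le {q m B n : ℕ} (hq : 1 ≤ q) (hn3 : 3 * q ≤ n) (hn4 : 4 ≤ n)
    (hcfB : ∀ x : Fin m, cf q x.val < B)
    (t : Finset (Fin m)) (hcard : t.card = n) :
    e2 (clusterGraph m q) t ≤ 2 * n - 4 := by
  set a : ℕ → ℕ := fun i => (t.filter fun y => cf q y.val = i).card with ha
  have hmaps : ∀ x ∈ t, cf q x.val ∈ Finset.range B :=
    fun x _ => Finset.mem_range.2 (hcfB x)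
  -- e2 as fiberwise sum
  have he2 : e2 (clusterGraph m q) t = ∑ i ∈ Finset.range B, a i * (a i - 1) := by
    rw [e2, ← Finset.sum_fiberwise_of_maps_to hmaps (fun x => dg (clusterGraph m q) t x)]
    refine Finset.sum_congr rfl fun i _ => ?_
    have hinner : ∀ x ∈ t.filter (fun y => cf q y.val = i),
        dg (clusterGraph m q) t x = a i - 1 := by
      intro x hx
      obtain ⟨hxt, hcfx⟩ := Finset.mem_filter.1 hx
      rw [dg_cluster t hxt, hcfx]
    rw [Finset.sum_congr rfl hinner, Finset.sum_const, smul_eq_mul]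
  -- the total count
  have hsum : ∑ i ∈ Finset.range B, a i = n := by
    rw [← hcard]
    exact (Finset.card_eq_sum_card_fiberwise hmaps).symm
  -- split range into lows and highs
  have hsplit : ∑ i ∈ Finset.range B, a i * (a i - 1)
      = ∑ i ∈ (Finset.range B).filter (fun i => i < q - 1), a i * (a i - 1)
      + ∑ i ∈ (Finset.range B).filter (fun i => ¬ i < q - 1), a i * (a i - 1) :=
    (Finset.sum_filter_add_sum_filter_not _ _ _).symm
  have hsplita : ∑ i ∈ Finset.range B, a i
      = ∑ i ∈ (Finset.range B).filter (fun i => i < q - 1), a i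
      + ∑ i ∈ (Finset.range B).filter (fun i => ¬ i < q - 1), a i :=
    (Finset.sum_filter_add_sum_filter_not _ _ _).symm
  set L := (Finset.range B).filter (fun i => i < q - 1) with hL
  set Hi := (Finset.range B).filter (fun i => ¬ i < q - 1) with hHi
  have hLcard : L.card ≤ q - 1 := by
    have : L ⊆ Finset.range (q - 1) := fun i hi =>
      Finset.mem_range.2 (Finset.mem_filter.1 hi).2
    simpa using Finset.card_le_card this
  have hLsum : ∑ i ∈ L, a i ≤ 3 * (q - 1) := by
    calc ∑ i ∈ L, a i ≤ L.card * 3 := by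
          refine Finset.sum_le_card_nsmul L a 3 fun i hi => ?_
          exact fiber_low t (Finset.mem_filter.1 hi).2
    _ ≤ (q - 1) * 3 := Nat.mul_le_mul_right 3 hLcard
    _ = 3 * (q - 1) := by ring
  have hLprod : ∑ i ∈ L, a i * (a i - 1) ≤ 2 * ∑ i ∈ L, a i := by
    rw [Finset.mul_sum]
    refine Finset.sum_le_sum fun i hi => ?_
    have h3 : a i ≤ 3 := fiber_low t (Finset.mem_filter.1 hi).2
    interval_cases h : a i <;> norm_num
  -- highs
  have hHa2 : ∀ i ∈ Hi, a i ≤ 2 := fun i hi =>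
    fiber_high t (Nat.le_of_not_lt (Finset.mem_filter.1 hi).2)
  have hZsum : ∑ i ∈ Hi.filter (fun i => a i ≠ 0), a i = ∑ i ∈ Hi, a i :=
    Finset.sum_filter_ne_zero Hi
  have hZa : ∑ i ∈ Hi.filter (fun i => a i ≠ 0), a i
      ≤ (Hi.filter (fun i => a i ≠ 0)).card * 2 := by
    refine Finset.sum_le_card_nsmul _ a 2 fun i hi => hHa2 i (Finset.mem_filter.1 hi).1
  have hHzero : ∑ i ∈ Hi.filter (fun i => ¬ a i ≠ 0), a i * (a i - 1) = 0 := by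
    refine Finset.sum_eq_zero fun i hi => ?_
    have h0 : a i = 0 := by
      have := (Finset.mem_filter.1 hi).2
      push_neg at this
      exact this
    rw [h0]
    simp
  have hHprod : ∑ i ∈ Hi, a i * (a i - 1)
      = ∑ i ∈ Hi.filter (fun i => a i ≠ 0), a i * (a i - 1) := by
    rw [← Finset.sum_filter_add_sum_filter_not Hi (fun i => a i ≠ 0)
      (fun i => a i * (a i - 1))]
    omega
  have hZprod : ∑ i ∈ Hi.filter (fun i => a i ≠ 0), (a i * (a i - 1) + 2)
      ≤ ∑ i ∈ Hi.filter (fun i => a i ≠ 0), 2 * a i := by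
    refine Finset.sum_le_sum fun i hi => ?_
    have h2 : a i ≤ 2 := hHa2 i (Finset.mem_filter.1 hi).1
    have h1 : a i ≠ 0 := (Finset.mem_filter.1 hi).2
    interval_cases h : a i <;> omega
  have hZexp : ∑ i ∈ Hi.filter (fun i => a i ≠ 0), (a i * (a i - 1) + 2)
      = ∑ i ∈ Hi.filter (fun i => a i ≠ 0), a i * (a i - 1)
        + 2 * (Hi.filter (fun i => a i ≠ 0)).card := by
    rw [Finset.sum_add_distrib, Finset.sum_const, smul_eq_mul]
    ring
  have hZmul : ∑ i ∈ Hi.filter (fun i => a i ≠ 0), 2 * a i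
      = 2 * ∑ i ∈ Hi.filter (fun i => a i ≠ 0), a i := by
    rw [Finset.mul_sum]
  have hHge : 3 ≤ ∑ i ∈ Hi, a i := by omega
  have hz2 : 2 ≤ (Hi.filter (fun i => a i ≠ 0)).card := by omega
  omega

lemma cluster_no_indep {k q m : ℕ} (hk : 1 ≤ k) (hcfB : ∀ x : Fin m, cf q x.val < k - 1)
    (t : Finset (Fin m)) (hcard : t.card = k)
    (hind : ∀ u ∈ t, ∀ v ∈ t, ¬ (clusterGraph m q).Adj u v) : False := by
  have hinj : Set.InjOn (fun x : Fin m => cf q x.val) t := by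
    intro x hx y hy hxy
    by_contra hne
    exact hind x hx y hy (show x ≠ y ∧ cf q x.val = cf q y.val from ⟨hne, hxy⟩)
  have := Finset.card_le_card_of_injOn (fun x : Fin m => cf q x.val)
    (fun x hx => Finset.mem_range.2 (hcfB x)) hinj
  rw [hcard, Finset.card_range] at this
  omega

end Cluster

section Glue
open Work Cluster

lemma half_prod (n : ℕ) (hn : 1 ≤ n) : ∃ c, n * (n - 1) = 2 * c ∧ n * (n - 1) / 2 = c := by
  obtain ⟨c, hc⟩ := Nat.even_mul_succ_self (n - 1)
  have hs : n - 1 + 1 = n := by omega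
  rw [hs] at hc
  have hc' : n * (n - 1) = 2 * c := by rw [mul_comm]; omega
  exact ⟨c, hc', by omega⟩

/-- `RamseyProp` holds at `p = n` in the first case. -/
lemma ramsey_at_n (k n : ℕ) (hk : 2 ≤ k) (hn : 4 ≤ n) (h1 : 3 * k - 4 ≤ n) :
    RamseyProp n (n * (n - 1) / 2 - n + 2) k 1 n := by
  intro G
  letI : DecidableRel G.Adj := Classical.decRel _
  by_cases hG : ∃ t : Finset (Fin n), t.card = n ∧
      edgeCount (G.induce (↑t : Set (Fin n))) ≤ n * (n - 1) / 2 - n + 2 - 1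
  · exact Or.inl hG
  right
  push_neg at hG
  have huniv : (Finset.univ : Finset (Fin n)).card = n := by simp
  have hce := hG Finset.univ huniv
  have hlinkG := link G Finset.univ
  have hlinkH := link Gᶜ Finset.univ
  have hcompl := e2_compl G Finset.univ
  rw [huniv] at hcompl
  obtain ⟨T₀, hT₀sub, hT₀ind, hT₀card⟩ := lemF Gᶜ Finset.univ
  rw [huniv] at hT₀card
  obtain ⟨c, hc1, hc2⟩ := half_prod n (by omega)
  rw [hc2] at hce
  rw [hc1] at hcompl
  have hmul : n * 3 ≤ n * (n - 1) := Nat.mul_le_mul_left n (by omega)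
  have hcn : n ≤ c := by omega
  have hkT : k ≤ T₀.card := by omega
  obtain ⟨T, hTsub, hTcard⟩ := Finset.exists_subset_card_eq hkT
  refine ⟨T, hTcard, ?_⟩
  have hzero := edgeCount_zero_of_indep (G := Gᶜ) (t := T)
    (fun u hu v hv => hT₀ind u (hTsub hu) v (hTsub hv))
  omega

/-- no Ramsey property below `n`. -/
lemma no_ramsey_small (n r k p : ℕ) (hk : 2 ≤ k) (hp : p < n)
    (h : RamseyProp n r k 1 p) : False := by
  rcases h ⊥ with ⟨t, hc, -⟩ | ⟨t, hc, he⟩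
  · have h1 : t.card ≤ p := by simpa using Finset.card_le_univ t
    omega
  · obtain ⟨u, hu, v, hv, huv⟩ := Finset.one_lt_card.1 (by omega : 1 < t.card)
    have hadj : (⊥ : SimpleGraph (Fin p))ᶜ.Adj u v := by
      rw [SimpleGraph.compl_adj]
      exact ⟨huv, fun hc => hc⟩
    letI : DecidableRel ((⊥ : SimpleGraph (Fin p))ᶜ).Adj := Classical.decRel _
    have := edgeCount_pos_of_adj ((⊥ : SimpleGraph (Fin p))ᶜ) hu hv hadj
    omega

/-- `RamseyProp` holds at `p = 2k-2+⌊n/3⌋` in the second case. -/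
lemma ramsey_at_p0 (k n : ℕ) (hk : 2 ≤ k) (hn : 4 ≤ n) (h2 : n < 3 * k - 4) :
    RamseyProp n (n * (n - 1) / 2 - n + 2) k 1 (2 * k - 2 + n / 3) := by
  intro G
  letI : DecidableRel G.Adj := Classical.decRel _
  by_cases hG : ∃ t : Finset (Fin (2 * k - 2 + n / 3)), t.card = n ∧
      edgeCount (G.induce (↑t : Set (Fin (2 * k - 2 + n / 3)))) ≤ n * (n - 1) / 2 - n + 2 - 1
  · exact Or.inl hG
  right
  push_neg at hG
  have hcuniv : (Finset.univ : Finset (Fin (2 * k - 2 + n / 3))).card = 2 * k - 2 + n / 3 := by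
    simp
  have hpn : n + 1 ≤ 2 * k - 2 + n / 3 := by omega
  have hW : ∀ j A, j ≤ 0 → A ⊆ (Finset.univ : Finset (Fin (2 * k - 2 + n / 3))) →
      A.card + 2 * j ≤ n → e2 Gᶜ A + 2 * j ≤ 2 * n - 4 := by
    intro j A hj hA hc
    have hj0 : j = 0 := Nat.le_zero.1 hj
    subst hj0
    obtain ⟨Bt, hABt, hBtu, hBtcard⟩ := Finset.exists_subsuperset_card_eq
      (n := n) (Finset.subset_univ A) (by omega) (by rw [hcuniv]; omega)
    have hce := hG Bt hBtcard
    have hlinkG := link G Bt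
    have hlinkH := link Gᶜ Bt
    have hcompl := e2_compl G Bt
    rw [hBtcard] at hcompl
    have hmono := e2_mono Gᶜ hABt
    obtain ⟨c, hc1, hc2⟩ := half_prod n (by omega)
    rw [hc2] at hce
    rw [hc1] at hcompl
    have hmul : n * 3 ≤ n * (n - 1) := Nat.mul_le_mul_left n (by omega)
    have hcn : n ≤ c := by omega
    omega
  obtain ⟨T, hTsub, hTcard, hTind⟩ := mainM Gᶜ n hn Finset.univ k 0 hW
    (by rw [hcuniv]; omega) (by rw [hcuniv]; omega)
  refine ⟨T, hTcard, ?_⟩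
  have hzero := edgeCount_zero_of_indep (G := Gᶜ) (t := T) hTind
  omega

/-- no Ramsey property between `n` and `2k-3+⌊n/3⌋` in the second case. -/
lemma no_ramsey_mid (k n m : ℕ) (hk : 2 ≤ k) (hn : 4 ≤ n) (h2 : n < 3 * k - 4)
    (hm1 : n ≤ m) (hm2 : m + 3 ≤ 2 * k + n / 3)
    (h : RamseyProp n (n * (n - 1) / 2 - n + 2) k 1 m) : False := by
  have hq1 : 1 ≤ n / 3 := by omega
  have hqk : n / 3 + 2 ≤ k := by omega
  have hcfB : ∀ x : Fin m, cf (n / 3) x.val < k - 1 := cf_lt hq1 hqk hm2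
  rcases h (clusterGraph m (n / 3))ᶜ with ⟨t, hc, he⟩ | ⟨t, hc, he⟩
  · have hlink1 := link (clusterGraph m (n / 3))ᶜ t
    have hcompl := e2_compl (clusterGraph m (n / 3)) t
    rw [hc] at hcompl
    have hH := e2_cluster_le hq1 (by omega) hn hcfB t hc
    obtain ⟨c, hc1, hc2⟩ := half_prod n (by omega)
    rw [hc2] at he
    rw [hc1] at hcompl
    have hmul : n * 3 ≤ n * (n - 1) := Nat.mul_le_mul_left n (by omega)
    have hcn : n ≤ c := by omega
    omega
  · apply cluster_no_indep (by omega : 1 ≤ k) hcfB t hc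
    intro u hu v hv hadj
    have hadj' : ((clusterGraph m (n / 3))ᶜ)ᶜ.Adj u v := by
      rw [compl_compl]
      exact hadj
    letI : DecidableRel (((clusterGraph m (n / 3))ᶜ)ᶜ).Adj := Classical.decRel _
    have := edgeCount_pos_of_adj (((clusterGraph m (n / 3))ᶜ)ᶜ) hu hv hadj'
    omega

end Glue

end Hidden17

theorem stmt_17 (k n : ℕ) (hk : 2 ≤ k) (hn : 4 ≤ n) :
    (3 * k - 4 ≤ n → genRamsey n (n * (n - 1) / 2 - n + 2) k 1 = n) ∧
    (n < 3 * k - 4 → genRamsey n (n * (n - 1) / 2 - n + 2) k 1 = 2 * k - 2 + n / 3) := by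
  constructor
  · intro h1
    have hmem : n ∈ {p | 0 < p ∧ RamseyProp n (n * (n - 1) / 2 - n + 2) k 1 p} :=
      ⟨by omega, ramsey_at_n k n hk hn h1⟩
    rw [genRamsey]
    apply le_antisymm (Nat.sInf_le hmem)
    apply le_csInf ⟨n, hmem⟩
    rintro m ⟨hm0, hmR⟩
    by_contra hlt
    push_neg at hlt
    exact no_ramsey_small n _ k m hk hlt hmR
  · intro h2
    have hmem : 2 * k - 2 + n / 3 ∈ {p | 0 < p ∧ RamseyProp n (n * (n - 1) / 2 - n + 2) k 1 p} :=
      ⟨by omega, ramsey_at_p0 k n hk hn h2⟩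
    rw [genRamsey]
    apply le_antisymm (Nat.sInf_le hmem)
    apply le_csInf ⟨2 * k - 2 + n / 3, hmem⟩
    rintro m ⟨hm0, hmR⟩
    by_contra hlt
    push_neg at hlt
    rcases Nat.lt_or_ge m n with hmn | hmn
    · exact no_ramsey_small n _ k m hk hmn hmR
    · exact no_ramsey_mid k n m hk hn h2 hmn (by omega) hmR
end

section
/- Let p, n, k, r, s be positive integers with n, k ≥ 2, r < n(n−1)/2, s < k(k−1)/2 and p ≥ max{n, k}. Let G be an (n, n(n−1)/2 − r) graph of order p satisfying the (k,s) condition. Then for every vertex v of G, p − R(n,r;k−1,s) ≤ d(v) ≤ R(n−1,r;k,s) − 1, where d(v) is the degree of v in G. -/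
open SimpleGraph

section Helpers

variable {V : Type*} {W : Type*}

/-- Set of edges of `G` with both endpoints in `s`. -/
def edgeIn (G : SimpleGraph V) (s : Finset V) : Set (Sym2 V) :=
  {e | e ∈ G.edgeSet ∧ ∀ x ∈ e, x ∈ s}

noncomputable def eCnt (G : SimpleGraph V) (s : Finset V) : ℕ := (edgeIn G s).ncard

lemma edgeIn_eq_image (G : SimpleGraph V) (s : Finset V) :
    edgeIn G s = Sym2.map (Subtype.val : (↑s : Set V) → V) '' (G.induce (↑s : Set V)).edgeSet := by
  ext e
  induction e using Sym2.ind with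
  | _ a b =>
    constructor
    · rintro ⟨he, hmem⟩
      have ha : a ∈ (↑s : Set V) := by simpa using hmem a (by simp)
      have hb : b ∈ (↑s : Set V) := by simpa using hmem b (by simp)
      refine ⟨s(⟨a, ha⟩, ⟨b, hb⟩), ?_, rfl⟩
      simpa [SimpleGraph.mem_edgeSet] using he
    · rintro ⟨e', he', hmap⟩
      induction e' using Sym2.ind with
      | _ x y =>
        have hxy : G.Adj (x : V) (y : V) := by
          simpa using (SimpleGraph.mem_edgeSet _).mp he'
        have heq : s((x : V), (y : V)) = s(a, b) := by simpa using hmap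
        have hmem : ∀ z ∈ s(a, b), z ∈ s := by
          intro z hz
          rw [← heq] at hz
          rcases Sym2.mem_iff.mp hz with rfl | rfl
          · exact x.2
          · exact y.2
        refine ⟨?_, hmem⟩
        rcases Sym2.eq_iff.mp heq with ⟨h1, h2⟩ | ⟨h1, h2⟩
        · rw [← h1, ← h2]; exact hxy
        · rw [← h1, ← h2]; exact hxy.symm

lemma edgeCount_induce (G : SimpleGraph V) (s : Finset V) :
    edgeCount (G.induce (↑s : Set V)) = eCnt G s := by
  rw [edgeCount, eCnt, edgeIn_eq_image,
    Set.ncard_image_of_injective _ (Sym2.map.injective Subtype.val_injective),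
    Nat.card_coe_set_eq]

lemma eCnt_insert_ge [Fintype V] [DecidableEq V] (G : SimpleGraph V) {s : Finset V} {v : V}
    (hv : v ∉ s)
    (hadj : ∀ w ∈ s, G.Adj v w) : eCnt G s + s.card ≤ eCnt G (insert v s) := by
  show eCnt G s + s.card ≤ (edgeIn G (insert v s)).ncard
  have hinj : Function.Injective (fun w : V => s(v, w)) := fun w₁ w₂ h => Sym2.congr_right.mp h
  have hBsub : (fun w : V => s(v, w)) '' ↑s ⊆ edgeIn G (insert v s) := by
    rintro e ⟨w, hw, rfl⟩
    refine ⟨(SimpleGraph.mem_edgeSet _).mpr (hadj w hw), ?_⟩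
    intro x hx
    rcases Sym2.mem_iff.mp hx with rfl | rfl
    · exact Finset.mem_insert_self _ _
    · exact Finset.mem_insert_of_mem hw
  have hAsub : edgeIn G s ⊆ edgeIn G (insert v s) := by
    rintro e ⟨he, hm⟩
    exact ⟨he, fun x hx => Finset.mem_insert_of_mem (hm x hx)⟩
  have hdisj : Disjoint (edgeIn G s) ((fun w : V => s(v, w)) '' ↑s) := by
    rw [Set.disjoint_left]
    rintro e ⟨he, hm⟩ ⟨w, hw, rfl⟩
    exact hv (hm v (by simp))
  calc eCnt G s + s.card
      = (edgeIn G s ∪ (fun w : V => s(v, w)) '' ↑s).ncard := by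
        rw [eCnt, Set.ncard_union_eq hdisj (Set.toFinite _) (Set.toFinite _),
          Set.ncard_image_of_injective _ hinj, Set.ncard_coe_finset]
    _ ≤ _ := Set.ncard_le_ncard (Set.union_subset hAsub hBsub) (Set.toFinite _)

lemma eCnt_insert_le [Fintype V] [DecidableEq V] (G : SimpleGraph V) {s : Finset V} {v : V}
    (hadj : ∀ w ∈ s, ¬ G.Adj v w) : eCnt G (insert v s) ≤ eCnt G s := by
  refine Set.ncard_le_ncard ?_ (Set.toFinite _)
  intro e
  induction e using Sym2.ind with
  | _ a b =>
    rintro ⟨he, hm⟩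
    have hAdj : G.Adj a b := (SimpleGraph.mem_edgeSet _).mp he
    have ha := hm a (by simp)
    have hb := hm b (by simp)
    have ha' : a ∈ s := by
      rcases Finset.mem_insert.mp ha with rfl | h
      · exfalso
        rcases Finset.mem_insert.mp hb with rfl | h
        · exact G.loopless.irrefl _ hAdj
        · exact hadj b h hAdj
      · exact h
    have hb' : b ∈ s := by
      rcases Finset.mem_insert.mp hb with rfl | h
      · exfalso
        exact hadj a ha' hAdj.symm
      · exact h
    refine ⟨he, ?_⟩
    intro x hx
    rcases Sym2.mem_iff.mp hx with rfl | rfl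
    · exact ha'
    · exact hb'

lemma edgeCount_top (W : Type*) [Fintype W] :
    edgeCount (⊤ : SimpleGraph W) = (Fintype.card W).choose 2 := by
  classical
  rw [edgeCount, Nat.card_coe_set_eq, Set.ncard_eq_toFinset_card',
    ← SimpleGraph.card_edgeFinset_top_eq_card_choose_two]
  convert rfl
  ext e
  simp

lemma eCnt_add_compl [Fintype V] (G : SimpleGraph V) (s : Finset V) :
    eCnt G s + eCnt Gᶜ s = s.card.choose 2 := by
  classical
  have hU : edgeIn G s ∪ edgeIn Gᶜ s = edgeIn (⊤ : SimpleGraph V) s := by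
    ext e
    induction e using Sym2.ind with
    | _ a b =>
      simp only [edgeIn, Set.mem_union, Set.mem_setOf_eq, SimpleGraph.mem_edgeSet,
        SimpleGraph.compl_adj, SimpleGraph.top_adj]
      constructor
      · rintro (⟨h, hm⟩ | ⟨⟨hne, h⟩, hm⟩)
        · exact ⟨h.ne, hm⟩
        · exact ⟨hne, hm⟩
      · rintro ⟨hne, hm⟩
        by_cases h : G.Adj a b
        · exact Or.inl ⟨h, hm⟩
        · exact Or.inr ⟨⟨hne, h⟩, hm⟩
  have hdisj : Disjoint (edgeIn G s) (edgeIn Gᶜ s) := by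
    rw [Set.disjoint_left]
    intro e
    induction e using Sym2.ind with
    | _ a b =>
      rintro ⟨he, -⟩ ⟨he', -⟩
      exact ((SimpleGraph.mem_edgeSet _).mp he').2 ((SimpleGraph.mem_edgeSet _).mp he)
  have hun := Set.ncard_union_eq hdisj (Set.toFinite _) (Set.toFinite _)
  rw [hU] at hun
  have htopind : ((⊤ : SimpleGraph V).induce (↑s : Set V)) = (⊤ : SimpleGraph (↑s : Set V)) := by
    ext a b
    simp [Subtype.coe_injective.ne_iff]
  have htop : eCnt (⊤ : SimpleGraph V) s = s.card.choose 2 := by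
    letI : Fintype (↑s : Set V) := s.finite_toSet.fintype
    rw [← edgeCount_induce, htopind, edgeCount_top]
    congr 1
    rw [← Set.ncard_coe_finset, Set.ncard_eq_toFinset_card', Set.toFinset_card]
  rw [eCnt] at htop
  show (edgeIn G s).ncard + (edgeIn Gᶜ s).ncard = s.card.choose 2
  rw [← hun]
  exact htop

lemma eCnt_eq_zero_of_indep {G : SimpleGraph V} {s : Finset V} (h : IsIndepFinset G s) :
    eCnt G s = 0 := by
  rw [eCnt]
  convert Set.ncard_empty (Sym2 V)
  rw [Set.eq_empty_iff_forall_notMem]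
  intro e
  induction e using Sym2.ind with
  | _ a b =>
    rintro ⟨he, hm⟩
    have hAdj : G.Adj a b := (SimpleGraph.mem_edgeSet _).mp he
    exact h a (hm a (by simp)) b (hm b (by simp)) hAdj.ne hAdj

lemma ramsey_aux : ∀ N a b : ℕ, a + b ≤ N → ∃ p : ℕ, ∀ {α : Type} (G : SimpleGraph α)
    (A : Finset α), p ≤ A.card →
    (∃ t ⊆ A, t.card = a ∧ IsIndepFinset G t) ∨ (∃ t ⊆ A, t.card = b ∧ IsIndepFinset Gᶜ t) := by
  intro N
  induction N with
  | zero =>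
    intro a b hab
    refine ⟨0, fun G A _ => ?_⟩
    exact Or.inl ⟨∅, Finset.empty_subset _, by simp; omega, by intro u hu; simp at hu⟩
  | succ N ih =>
    intro a b hab
    match a, b with
    | 0, b => exact ⟨0, fun G A _ => Or.inl ⟨∅, Finset.empty_subset _, by simp,
        by intro u hu; simp at hu⟩⟩
    | a + 1, 0 => exact ⟨0, fun G A _ => Or.inr ⟨∅, Finset.empty_subset _, by simp,
        by intro u hu; simp at hu⟩⟩
    | a + 1, b + 1 =>
      obtain ⟨p₁, h₁⟩ := ih a (b + 1) (by omega)
      obtain ⟨p₂, h₂⟩ := ih (a + 1) b (by omega)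
      refine ⟨p₁ + p₂ + 1, ?_⟩
      intro α G A hA
      classical
      obtain ⟨v, hv⟩ : A.Nonempty := Finset.card_pos.mp (by omega)
      set A' := A.erase v with hA'
      have hcardA' : p₁ + p₂ ≤ A'.card := by
        rw [hA', Finset.card_erase_of_mem hv]; omega
      set N₁ := A'.filter (fun w => ¬ G.Adj v w) with hN₁
      set N₂ := A'.filter (fun w => G.Adj v w) with hN₂
      have hsplit : N₂.card + N₁.card = A'.card := Finset.card_filter_add_card_filter_not _
      rcases le_or_gt p₁ N₁.card with hcase | hcase
      · rcases h₁ G N₁ hcase with ⟨t, hts, htc, htind⟩ | ⟨t, hts, htc, htind⟩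
        · left
          have htA' : t ⊆ A' := hts.trans (Finset.filter_subset _ _)
          have hvt : v ∉ t := fun h => (Finset.mem_erase.mp (htA' h)).1 rfl
          refine ⟨insert v t, ?_, ?_, ?_⟩
          · exact Finset.insert_subset hv (htA'.trans (Finset.erase_subset _ _))
          · rw [Finset.card_insert_of_notMem hvt, htc]
          · intro x hx y hy hne
            rcases Finset.mem_insert.mp hx with rfl | hx'
            · rcases Finset.mem_insert.mp hy with rfl | hy'
              · exact absurd rfl hne
              · exact (Finset.mem_filter.mp (hts hy')).2
            · rcases Finset.mem_insert.mp hy with rfl | hy'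
              · intro hadj
                exact (Finset.mem_filter.mp (hts hx')).2 hadj.symm
              · exact htind x hx' y hy' hne
        · exact Or.inr ⟨t, hts.trans ((Finset.filter_subset _ _).trans (Finset.erase_subset _ _)),
            htc, htind⟩
      · have hcase₂ : p₂ ≤ N₂.card := by omega
        rcases h₂ G N₂ hcase₂ with ⟨t, hts, htc, htind⟩ | ⟨t, hts, htc, htind⟩
        · exact Or.inl ⟨t, hts.trans ((Finset.filter_subset _ _).trans (Finset.erase_subset _ _)),
            htc, htind⟩
        · right
          have htA' : t ⊆ A' := hts.trans (Finset.filter_subset _ _)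
          have hvt : v ∉ t := fun h => (Finset.mem_erase.mp (htA' h)).1 rfl
          refine ⟨insert v t, ?_, ?_, ?_⟩
          · exact Finset.insert_subset hv (htA'.trans (Finset.erase_subset _ _))
          · rw [Finset.card_insert_of_notMem hvt, htc]
          · intro x hx y hy hne hadj
            rw [SimpleGraph.compl_adj] at hadj
            rcases Finset.mem_insert.mp hx with rfl | hx'
            · rcases Finset.mem_insert.mp hy with rfl | hy'
              · exact absurd rfl hne
              · exact hadj.2 (Finset.mem_filter.mp (hts hy')).2
            · rcases Finset.mem_insert.mp hy with rfl | hy'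
              · exact hadj.2 (Finset.mem_filter.mp (hts hx')).2.symm
              · exact htind x hx' y hy' hne (SimpleGraph.compl_adj _ _ _ |>.mpr hadj)

lemma ramseyProp_exists (n r k s : ℕ) : ∃ p, 0 < p ∧ RamseyProp n r k s p := by
  obtain ⟨p, hp⟩ := ramsey_aux (n + k) n k le_rfl
  refine ⟨p + 1, Nat.succ_pos _, ?_⟩
  intro G
  have hcard : p ≤ (Finset.univ : Finset (Fin (p + 1))).card := by simp
  rcases hp G Finset.univ hcard with ⟨t, -, htc, hind⟩ | ⟨t, -, htc, hind⟩
  · exact Or.inl ⟨t, htc, by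
      rw [edgeCount_induce, eCnt_eq_zero_of_indep hind]; exact Nat.zero_le _⟩
  · exact Or.inr ⟨t, htc, by
      rw [edgeCount_induce, eCnt_eq_zero_of_indep hind]; exact Nat.zero_le _⟩

lemma comap_compl_eq {f : W → V} (hf : Function.Injective f) (G : SimpleGraph V) :
    (Gᶜ).comap f = (G.comap f)ᶜ := by
  ext a b
  simp [SimpleGraph.compl_adj, hf.ne_iff]

/-- Transfer edge counts through an injective comap. -/
lemma edgeCount_comap_induce (H : SimpleGraph V) {f : W → V} (hf : Function.Injective f)
    (t : Finset W) :
    edgeCount ((H.comap f).induce (↑t : Set W))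
      = edgeCount (H.induce (↑(t.map ⟨f, hf⟩) : Set V)) := by
  have hbij : Function.Bijective
      (fun x : (↑t : Set W) => (⟨f x.1, by
        simp only [Finset.coe_map, Set.mem_image, Finset.mem_coe]
        exact ⟨x.1, x.2, rfl⟩⟩ : (↑(t.map ⟨f, hf⟩) : Set V))) := by
    constructor
    · intro x y hxy
      exact Subtype.ext (hf (congrArg Subtype.val hxy))
    · rintro ⟨y, hy⟩
      simp only [Finset.coe_map, Set.mem_image, Finset.mem_coe] at hy
      obtain ⟨x, hx, rfl⟩ := hy
      exact ⟨⟨x, hx⟩, rfl⟩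
  let iso : (H.comap f).induce (↑t : Set W) ≃g H.induce (↑(t.map ⟨f, hf⟩) : Set V) :=
    ⟨Equiv.ofBijective _ hbij, Iff.rfl⟩
  exact Nat.card_congr iso.mapEdgeSet

/-- Apply a Ramsey property inside any sufficiently large finset. -/
lemma ramseyProp_apply {n r k s q : ℕ} (hR : RamseyProp n r k s q) {α : Type*}
    (H : SimpleGraph α) (A : Finset α) (hA : q ≤ A.card) :
    (∃ t : Finset α, t ⊆ A ∧ t.card = n ∧ edgeCount (H.induce (↑t : Set α)) ≤ r - 1) ∨
    (∃ t : Finset α, t ⊆ A ∧ t.card = k ∧ edgeCount ((Hᶜ).induce (↑t : Set α)) ≤ s - 1) := by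
  classical
  obtain ⟨B, hBA, hB⟩ := Finset.exists_subset_card_eq hA
  let e : ↥B ≃ Fin q := Finset.equivFinOfCardEq hB
  let f : Fin q → α := fun i => ((e.symm i : ↥B) : α)
  have hf : Function.Injective f := fun i j hij =>
    e.symm.injective (Subtype.coe_injective hij)
  have hrange : ∀ i, f i ∈ A := fun i => hBA (e.symm i).2
  have hmapsub : ∀ t : Finset (Fin q), t.map ⟨f, hf⟩ ⊆ A := by
    intro t x hx
    obtain ⟨i, -, rfl⟩ := Finset.mem_map.mp hx
    exact hrange i
  rcases hR (H.comap f) with ⟨t, htc, hcnt⟩ | ⟨t, htc, hcnt⟩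
  · left
    refine ⟨t.map ⟨f, hf⟩, hmapsub t, by simp [htc], ?_⟩
    rw [← edgeCount_comap_induce H hf t]
    exact hcnt
  · right
    refine ⟨t.map ⟨f, hf⟩, hmapsub t, by simp [htc], ?_⟩
    rw [← comap_compl_eq hf] at hcnt
    rw [← edgeCount_comap_induce (Hᶜ) hf t]
    exact hcnt

lemma choose_two_succ_eq (n : ℕ) (hn : 2 ≤ n) :
    n.choose 2 = (n - 1).choose 2 + (n - 1) := by
  obtain ⟨m, rfl⟩ : ∃ m, n = m + 2 := ⟨n - 2, by omega⟩
  rw [Nat.choose_two_right, Nat.choose_two_right]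
  show (m + 2) * (m + 1) / 2 = (m + 1) * m / 2 + (m + 1)
  have h : (m + 2) * (m + 1) = (m + 1) * m + (m + 1) * 2 := by ring
  rw [h, Nat.add_mul_div_right _ _ (by norm_num : (0:ℕ) < 2)]

end Helpers


theorem stmt_18 (p n k r s : ℕ) (hn : 2 ≤ n) (hk : 2 ≤ k) (hr0 : 0 < r) (hs0 : 0 < s)
    (hr : r < n * (n - 1) / 2) (hs : s < k * (k - 1) / 2) (hp : max n k ≤ p)
    {V : Type*} [Fintype V] (hV : Fintype.card V = p) (G : SimpleGraph V)
    (hG : IsNMGraph n (n * (n - 1) / 2 - r) G) (hks : KSCondition k s G) :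
    ∀ v : V, p - genRamsey n r (k - 1) s ≤ degreeCount G v ∧
      degreeCount G v ≤ genRamsey (n - 1) r k s - 1 := by
  intro v
  classical
  have hdeg : degreeCount G v = (G.neighborFinset v).card := by
    rw [degreeCount, Nat.card_eq_fintype_card, SimpleGraph.card_neighborSet_eq_degree]
    rfl
  have hchoose2 : ∀ m : ℕ, m.choose 2 = m * (m - 1) / 2 := Nat.choose_two_right
  -- upper bound
  have hupper : degreeCount G v ≤ genRamsey (n - 1) r k s - 1 := by
    have hne : {q | 0 < q ∧ RamseyProp (n - 1) r k s q}.Nonempty := by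
      obtain ⟨q, hq1, hq2⟩ := ramseyProp_exists (n - 1) r k s
      exact ⟨q, hq1, hq2⟩
    have hmem : 0 < genRamsey (n - 1) r k s ∧
        RamseyProp (n - 1) r k s (genRamsey (n - 1) r k s) := Nat.sInf_mem hne
    by_contra hcon
    have hRle : genRamsey (n - 1) r k s ≤ (G.neighborFinset v).card := by
      have h1 := hmem.1
      rw [hdeg] at hcon
      omega
    rcases ramseyProp_apply hmem.2 (Gᶜ) (G.neighborFinset v) hRle with
      ⟨t, hts, htc, hcnt⟩ | ⟨t, hts, htc, hcnt⟩
    · -- n-1 vertices among the neighbors, few edges in Gᶜ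
      have hvt : v ∉ t := fun h => G.notMem_neighborFinset_self v (hts h)
      have hadj : ∀ w ∈ t, G.Adj v w := fun w hw =>
        (SimpleGraph.mem_neighborFinset G v w).mp (hts hw)
      have hins : (insert v t).card = n := by
        rw [Finset.card_insert_of_notMem hvt, htc]; omega
      have h1 := hG _ hins
      rw [edgeCount_induce] at h1 hcnt
      have h2 := eCnt_insert_ge G hvt hadj
      have h3 := eCnt_add_compl G t
      rw [htc] at h2 h3
      rw [← hchoose2 n] at h1 hr
      have h4 := choose_two_succ_eq n hn
      omega
    · -- k vertices among the neighbors with few edges in G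
      rw [compl_compl] at hcnt
      have := hks t htc
      omega
  refine ⟨?_, hupper⟩
  -- lower bound
  have hne : {q | 0 < q ∧ RamseyProp n r (k - 1) s q}.Nonempty := by
    obtain ⟨q, hq1, hq2⟩ := ramseyProp_exists n r (k - 1) s
    exact ⟨q, hq1, hq2⟩
  have hmem : 0 < genRamsey n r (k - 1) s ∧
      RamseyProp n r (k - 1) s (genRamsey n r (k - 1) s) := Nat.sInf_mem hne
  by_contra hcon
  have hdle : (G.neighborFinset v).card ≤ p - 1 := by
    have hsub : G.neighborFinset v ⊆ Finset.univ.erase v := by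
      intro w hw
      exact Finset.mem_erase.mpr ⟨((SimpleGraph.mem_neighborFinset G v w).mp hw).ne',
        Finset.mem_univ w⟩
    have := Finset.card_le_card hsub
    rwa [Finset.card_erase_of_mem (Finset.mem_univ v), Finset.card_univ, hV] at this
  set M := Finset.univ \ insert v (G.neighborFinset v) with hM
  have hMcard : M.card = p - 1 - (G.neighborFinset v).card := by
    rw [hM, Finset.card_sdiff_of_subset (Finset.subset_univ _), Finset.card_univ, hV,
      Finset.card_insert_of_notMem (G.notMem_neighborFinset_self v)]
    omega
  have hRle : genRamsey n r (k - 1) s ≤ M.card := by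
    have h0 := hmem.1
    rw [hdeg] at hcon
    omega
  rcases ramseyProp_apply hmem.2 (Gᶜ) M hRle with
    ⟨t, hts, htc, hcnt⟩ | ⟨t, hts, htc, hcnt⟩
  · -- n non-neighbors with few edges in Gᶜ : too many edges in G
    have h1 := hG t htc
    rw [edgeCount_induce] at h1 hcnt
    have h3 := eCnt_add_compl G t
    rw [htc] at h3
    rw [← hchoose2 n] at h1 hr
    omega
  · -- k-1 non-neighbors with few edges in G : add v
    rw [compl_compl] at hcnt
    rw [edgeCount_induce] at hcnt
    have hvM : v ∉ M := by
      rw [hM]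
      simp
    have hvt : v ∉ t := fun h => hvM (hts h)
    have hnadj : ∀ w ∈ t, ¬ G.Adj v w := by
      intro w hw hadj
      have := hts hw
      rw [hM, Finset.mem_sdiff] at this
      exact this.2 (Finset.mem_insert_of_mem ((SimpleGraph.mem_neighborFinset G v w).mpr hadj))
    have hins : (insert v t).card = k := by
      rw [Finset.card_insert_of_notMem hvt, htc]; omega
    have h1 := hks _ hins
    rw [edgeCount_induce] at h1
    have h2 := eCnt_insert_le G hnadj
    omega
end
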